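/- arXiv:math-ph/0110029 — 9 statements merged into one kernel-verified Lean document; each statement's English description precedes it below -/
import Mathlib

section
/- For any initial data t₀ ∈ ℝ, h₀ > 0, h₁ ∈ ℝ, there exists a unique solution h : ℝ → ℝ, defined and positive on all of ℝ, of the differential equation h(t)³(h''(t) + h'(t)) = 1 with h(t₀) = h₀ and h'(t₀) = h₁. -/
/-!
Along a solution of `x' = y, y' = x⁻³ - y` the energy `y² / 2 + 1 / (2 x²)` has derivative `-y²`,
so it never increases forward in time and grows at most like `exp (2 |t - t₀|)` backward in time.
On a bounded time interval it therefore keeps `x` away from `0` and `y` bounded. To exploit this,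
cut `x⁻³` off below some `ε` and clip `y` to `[-R, R]`: the resulting field is bounded and globally
Lipschitz, so Picard–Lindelöf solves it on the whole interval, and the energy of the truncated
system (with kinetic part `∫₀^y clip`) obeys the same bounds, which keep the solution in the
region where both truncations are inactive. Uniqueness holds because the field is Lipschitz on
every half-plane `ε ≤ x`, and the solutions on growing intervals glue to a global one.
-/

open Set Metric Real intervalIntegral
open scoped NNReal

theorem le_mul_exp_of_hasDerivAt_le_mul {u u' : ℝ → ℝ} {a b K : ℝ}
    (hu : ∀ t ∈ Ioo a b, HasDerivAt u (u' t) t) (hK : ∀ t ∈ Ioo a b, u' t ≤ K * u t)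
    {s t : ℝ} (hs : s ∈ Ioo a b) (ht : t ∈ Ioo a b) (hst : s ≤ t) :
    u t ≤ u s * exp (K * (t - s)) := by
  have hderiv : ∀ t ∈ Ioo a b, HasDerivAt (fun t => u t * exp (-K * t))
      ((u' t - K * u t) * exp (-K * t)) t := fun t ht =>
    ((hu t ht).mul ((hasDerivAt_id' t).const_mul (-K)).exp).congr_deriv (by ring)
  have hanti : AntitoneOn (fun t => u t * exp (-K * t)) (Ioo a b) := by
    refine antitoneOn_of_hasDerivWithinAt_nonpos (convex_Ioo a b)
      (f' := fun t => (u' t - K * u t) * exp (-K * t)) ?_ ?_ ?_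
    · exact HasDerivAt.continuousOn hderiv
    · rw [interior_Ioo]
      exact fun t ht => (hderiv t ht).hasDerivWithinAt
    · rw [interior_Ioo]
      exact fun t ht => mul_nonpos_of_nonpos_of_nonneg (by linarith [hK t ht]) (exp_pos _).le
  have := hanti hs ht hst
  calc u t = u t * exp (-K * t) * exp (K * t) := by rw [mul_assoc, ← exp_add]; simp
    _ ≤ u s * exp (-K * s) * exp (K * t) := by gcongr
    _ = u s * exp (K * (t - s)) := by rw [mul_assoc, ← exp_add]; ring_nf

theorem le_mul_exp_abs_of_abs_hasDerivAt_le_mul {u u' : ℝ → ℝ} {a b K : ℝ}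
    (hu : ∀ t ∈ Ioo a b, HasDerivAt u (u' t) t) (hK : ∀ t ∈ Ioo a b, |u' t| ≤ K * u t)
    {s t : ℝ} (hs : s ∈ Ioo a b) (ht : t ∈ Ioo a b) :
    u t ≤ u s * exp (K * |t - s|) := by
  rcases le_total s t with hst | hts
  · rw [abs_of_nonneg (sub_nonneg.2 hst)]
    exact le_mul_exp_of_hasDerivAt_le_mul hu (fun t ht => (le_abs_self _).trans (hK t ht))
      hs ht hst
  · have hneg : ∀ {a b t : ℝ}, t ∈ Ioo a b → -t ∈ Ioo (-b) (-a) := fun ht =>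
      ⟨neg_lt_neg ht.2, neg_lt_neg ht.1⟩
    have hneg' : ∀ {t}, t ∈ Ioo (-b) (-a) → -t ∈ Ioo a b := fun ht => by simpa using hneg ht
    have := le_mul_exp_of_hasDerivAt_le_mul (u := fun t => u (-t)) (u' := fun t => -u' (-t))
      (fun t ht => ((hu (-t) (hneg' ht)).comp t (hasDerivAt_neg t)).congr_deriv (by ring))
      (fun t ht => (neg_le_abs _).trans (hK (-t) (hneg' ht)))
      (hneg hs) (hneg ht) (neg_le_neg hts)
    rw [abs_of_nonpos (sub_nonpos.2 hts), neg_sub]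
    simpa [sub_eq_add_neg, add_comm] using this

theorem exists_forall_mem_ball_hasDerivAt_of_lipschitzWith {E : Type*} [NormedAddCommGroup E]
    [NormedSpace ℝ E] [CompleteSpace E] {v : E → E} {K : ℝ≥0} (hv : LipschitzWith K v)
    {L : ℝ} (hL : ∀ x, ‖v x‖ ≤ L) (t₀ : ℝ) (x₀ : E) {T : ℝ} (hT : 0 ≤ T) :
    ∃ α : ℝ → E, α t₀ = x₀ ∧ ∀ t ∈ ball t₀ T, HasDerivAt α (v (α t)) t := by
  have ht₀ : t₀ ∈ Icc (t₀ - T) (t₀ + T) := ⟨by linarith, by linarith⟩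
  have hPL : IsPicardLindelof (fun _ => v) ⟨t₀, ht₀⟩ x₀ (L.toNNReal * T.toNNReal) 0 L.toNNReal K :=
    .of_time_independent (fun x _ => (hL x).trans (Real.le_coe_toNNReal L)) hv.lipschitzOnWith
      (by simp [hT])
  obtain ⟨α, hα₀, hα⟩ := hPL.exists_eq_forall_mem_Icc_hasDerivWithinAt₀
  refine ⟨α, hα₀, fun t ht => ?_⟩
  rw [Real.ball_eq_Ioo] at ht
  exact (hα t (Ioo_subset_Icc_self ht)).hasDerivAt (Icc_mem_nhds ht.1 ht.2)

theorem exists_forall_hasDerivAt_of_forall_ball {E : Type*} [NormedAddCommGroup E]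
    [NormedSpace ℝ E] {v : E → E} {s : Set E} {t₀ : ℝ} {x₀ : E}
    (hunique : ∀ T : ℝ, ∀ f g : ℝ → E,
      (∀ t ∈ ball t₀ T, HasDerivAt f (v (f t)) t ∧ f t ∈ s) →
      (∀ t ∈ ball t₀ T, HasDerivAt g (v (g t)) t ∧ g t ∈ s) → f t₀ = g t₀ → EqOn f g (ball t₀ T))
    (hexists : ∀ T > 0, ∃ f : ℝ → E, f t₀ = x₀ ∧
      ∀ t ∈ ball t₀ T, HasDerivAt f (v (f t)) t ∧ f t ∈ s) :
    ∃ f : ℝ → E, f t₀ = x₀ ∧ ∀ t, HasDerivAt f (v (f t)) t ∧ f t ∈ s := by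
  choose S hS₀ hS using hexists
  have hpos : ∀ t, 0 < dist t t₀ + 1 := fun t => by positivity
  have hmem : ∀ t, t ∈ ball t₀ (dist t t₀ + 1) := fun t => by simp [mem_ball]
  let f t := S (dist t t₀ + 1) (hpos t) t
  have hfS : ∀ T (hT : 0 < T), ∀ t ∈ ball t₀ T, f t = S T hT t := by
    intro T hT t ht
    refine hunique _ _ _ (fun u hu => hS _ _ u (ball_subset_ball (min_le_right _ _) hu))
      (fun u hu => hS _ _ u (ball_subset_ball (min_le_left _ _) hu))
      (by rw [hS₀, hS₀]) ?_
    exact mem_ball.2 (lt_min (mem_ball.1 ht) (mem_ball.1 (hmem t)))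
  refine ⟨f, hS₀ _ _, fun t => ⟨?_, (hS _ _ t (hmem t)).2⟩⟩
  have hfeq : f =ᶠ[nhds t] S _ (hpos t) :=
    Filter.eventually_of_mem (isOpen_ball.mem_nhds (hmem t)) (hfS _ _)
  rw [hfS _ (hpos t) t (hmem t)]
  exact (hS _ _ t (hmem t)).1.congr_of_eventuallyEq hfeq

namespace InvCubeODE

noncomputable def field (p : ℝ × ℝ) : ℝ × ℝ := (p.2, (p.1 ^ 3)⁻¹ - p.2)

noncomputable def cutInvCube (ε x : ℝ) : ℝ := ((max x ε) ^ 3)⁻¹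

noncomputable def cutField (ε : ℝ) (p : ℝ × ℝ) : ℝ × ℝ := (p.2, cutInvCube ε p.1 - p.2)

def clip (R y : ℝ) : ℝ := max (-R) (min y R)

noncomputable def clippedField (ε R : ℝ) (p : ℝ × ℝ) : ℝ × ℝ := cutField ε (p.1, clip R p.2)

noncomputable def potential (ε x : ℝ) : ℝ := (2 * ε ^ 2)⁻¹ - ∫ u in ε..x, cutInvCube ε u

noncomputable def clipPotential (R y : ℝ) : ℝ := ∫ u in 0..y, clip R u

noncomputable def energy (ε R : ℝ) (p : ℝ × ℝ) : ℝ := clipPotential R p.2 + potential ε p.1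

section cutInvCube

variable {ε x : ℝ}

lemma cutInvCube_pos (hε : 0 < ε) (x : ℝ) : 0 < cutInvCube ε x := by
  have : 0 < max x ε := lt_max_of_lt_right hε
  unfold cutInvCube; positivity

lemma cutInvCube_le (hε : 0 < ε) (x : ℝ) : cutInvCube ε x ≤ (ε ^ 3)⁻¹ := by
  unfold cutInvCube
  gcongr
  exact le_max_right _ _

lemma cutInvCube_of_le (hx : ε ≤ x) : cutInvCube ε x = (x ^ 3)⁻¹ := by
  rw [cutInvCube, max_eq_left hx]

lemma continuous_cutInvCube (hε : 0 < ε) : Continuous (cutInvCube ε) :=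
  ((continuous_id.max continuous_const).pow 3).inv₀ fun _ =>
    (pow_pos (lt_max_of_lt_right hε) 3).ne'

lemma exists_lipschitzOnWith_inv_pow_three (hε : 0 < ε) :
    ∃ K, LipschitzOnWith K (fun x : ℝ => (x ^ 3)⁻¹) (Ici ε) := by
  refine ⟨(3 * (ε ^ 4)⁻¹).toNNReal, (convex_Ici ε).lipschitzOnWith_of_nnnorm_hasDerivWithin_le
    (f' := fun x => -(3 * (x ^ 4)⁻¹)) (fun x hx => ?_) (fun x hx => ?_)⟩
  · have hx0 : x ≠ 0 := (hε.trans_le hx).ne'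
    have := (hasDerivAt_pow 3 x).inv (pow_ne_zero 3 hx0)
    exact (this.congr_deriv (by field_simp; ring)).hasDerivWithinAt
  · have hx0 : 0 < x := hε.trans_le hx
    rw [← NNReal.coe_le_coe, coe_nnnorm, norm_neg, norm_of_nonneg (by positivity),
      Real.coe_toNNReal _ (by positivity)]
    gcongr
    exact hx

lemma exists_lipschitzWith_cutInvCube (hε : 0 < ε) : ∃ K, LipschitzWith K (cutInvCube ε) := by
  obtain ⟨K, hK⟩ := exists_lipschitzOnWith_inv_pow_three hε
  have hmax : LipschitzWith 1 (fun x : ℝ => max x ε) := LipschitzWith.id.max_const ε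
  exact ⟨_, lipschitzOnWith_univ.1 (hK.comp hmax.lipschitzOnWith fun x _ => le_max_right x ε)⟩

end cutInvCube

section potential

variable {ε x : ℝ}

lemma hasDerivAt_potential (hε : 0 < ε) (x : ℝ) :
    HasDerivAt (potential ε) (-cutInvCube ε x) x :=
  (((continuous_cutInvCube hε).integral_hasStrictDerivAt ε x).hasDerivAt).const_sub _

lemma le_potential_of_le (hε : 0 < ε) (hx : x ≤ ε) : (2 * ε ^ 2)⁻¹ ≤ potential ε x := by
  have : 0 ≤ ∫ u in x..ε, cutInvCube ε u :=
    integral_nonneg hx fun u _ => (cutInvCube_pos hε u).le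
  rw [potential, integral_symm]
  linarith

lemma potential_of_le (hε : 0 < ε) (hx : ε ≤ x) : potential ε x = (2 * x ^ 2)⁻¹ := by
  have hderiv : ∀ u ∈ uIcc ε x, HasDerivAt (fun y : ℝ => -(2 * y ^ 2)⁻¹) (cutInvCube ε u) u := by
    intro u hu
    rw [uIcc_of_le hx] at hu
    have hu0 : u ≠ 0 := (hε.trans_le hu.1).ne'
    have := (((hasDerivAt_pow 2 u).const_mul 2).inv (by positivity)).neg
    refine this.congr_deriv ?_
    rw [cutInvCube_of_le hu.1]
    field_simp
    ring
  rw [potential, integral_eq_sub_of_hasDerivAt hderiv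
    ((continuous_cutInvCube hε).intervalIntegrable _ _)]
  ring

lemma potential_nonneg (hε : 0 < ε) (x : ℝ) : 0 ≤ potential ε x := by
  rcases le_total x ε with hx | hx
  · exact (by positivity : (0 : ℝ) ≤ (2 * ε ^ 2)⁻¹).trans (le_potential_of_le hε hx)
  · rw [potential_of_le hε hx]
    have : 0 < x := hε.trans_le hx
    positivity

end potential

section clip

variable {R y : ℝ}

lemma lipschitzWith_clip (R : ℝ) : LipschitzWith 1 (clip R) :=
  (LipschitzWith.id.min_const R).const_max (-R)

lemma abs_clip_le (hR : 0 ≤ R) (y : ℝ) : |clip R y| ≤ R := by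
  simp only [clip, abs_le]
  grind

lemma clip_of_abs_le (h : |y| ≤ R) : clip R y = y := by
  rw [abs_le] at h
  simp only [clip]
  grind

lemma clip_of_abs_clip_lt (h : |clip R y| < R) : clip R y = y := by
  simp only [clip] at *
  rw [abs_lt] at h
  grind

lemma clip_mul_sub_clip_nonneg (hR : 0 ≤ R) (y : ℝ) : 0 ≤ clip R y * (y - clip R y) := by
  simp only [clip]
  rcases le_total y R with h | h
  · rcases le_total (-R) y with h' | h'
    · simp [min_eq_left h, max_eq_right h']
    · rw [min_eq_left h, max_eq_left h']; nlinarith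
  · rw [min_eq_right h, max_eq_right (by linarith)]; nlinarith

lemma hasDerivAt_clipPotential (R y : ℝ) : HasDerivAt (clipPotential R) (clip R y) y :=
  ((lipschitzWith_clip R).continuous.integral_hasStrictDerivAt 0 y).hasDerivAt

lemma clipPotential_eq (hR : 0 ≤ R) (y : ℝ) :
    clipPotential R y = clip R y * y - clip R y ^ 2 / 2 := by
  have hint : ∀ a b, IntervalIntegrable (clip R) MeasureTheory.volume a b :=
    fun a b => (lipschitzWith_clip R).continuous.intervalIntegrable a b
  -- `clip R` is the identity between `0` and `clip R y`, and constant between `clip R y` and `y`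
  have hid : ∫ u in (0)..clip R y, clip R u = ∫ u in (0)..clip R y, u := by
    refine integral_congr fun u hu => ?_
    simp only [clip, uIcc, mem_Icc] at hu ⊢
    grind
  have hconst : ∫ u in clip R y..y, clip R u = ∫ _ in clip R y..y, clip R y := by
    refine integral_congr fun u hu => ?_
    simp only [clip, uIcc, mem_Icc] at hu ⊢
    grind
  rw [clipPotential, ← integral_add_adjacent_intervals (hint 0 (clip R y)) (hint _ y), hid,
    hconst, integral_id, integral_const, smul_eq_mul]
  ring

lemma sq_clip_le_two_mul_clipPotential (hR : 0 ≤ R) (y : ℝ) :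
    clip R y ^ 2 ≤ 2 * clipPotential R y := by
  rw [clipPotential_eq hR]
  nlinarith [clip_mul_sub_clip_nonneg hR y]

lemma clipPotential_of_abs_le (h : |y| ≤ R) : clipPotential R y = y ^ 2 / 2 := by
  rw [clipPotential_eq ((abs_nonneg y).trans h), clip_of_abs_le h]
  ring

end clip

section fields

variable {ε R : ℝ}

lemma cutField_of_le {p : ℝ × ℝ} (h : ε ≤ p.1) : cutField ε p = field p := by
  rw [cutField, field, cutInvCube_of_le h]

lemma exists_lipschitzWith_cutField (hε : 0 < ε) : ∃ K, LipschitzWith K (cutField ε) := by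
  obtain ⟨K, hK⟩ := exists_lipschitzWith_cutInvCube hε
  exact ⟨_, LipschitzWith.prod_snd.prodMk
    ((hK.comp LipschitzWith.prod_fst).sub LipschitzWith.prod_snd)⟩

lemma exists_lipschitzOnWith_field (hε : 0 < ε) :
    ∃ K, LipschitzOnWith K field {p | ε ≤ p.1} := by
  obtain ⟨K, hK⟩ := exists_lipschitzWith_cutField hε
  refine ⟨K, fun p hp q hq => ?_⟩
  rw [← cutField_of_le hp, ← cutField_of_le hq]
  exact hK p q

lemma exists_lipschitzWith_clippedField (hε : 0 < ε) (R : ℝ) :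
    ∃ K, LipschitzWith K (clippedField ε R) := by
  obtain ⟨K, hK⟩ := exists_lipschitzWith_cutField hε
  exact ⟨_, hK.comp (LipschitzWith.prod_fst.prodMk
    ((lipschitzWith_clip R).comp LipschitzWith.prod_snd))⟩

lemma norm_clippedField_le (hε : 0 < ε) (hR : 0 ≤ R) (p : ℝ × ℝ) :
    ‖clippedField ε R p‖ ≤ (ε ^ 3)⁻¹ + R := by
  have hc := abs_clip_le hR p.2
  have hg := cutInvCube_le hε p.1
  have hg₀ := cutInvCube_pos hε p.1
  rw [clippedField, cutField, Prod.norm_def, Real.norm_eq_abs, Real.norm_eq_abs]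
  refine max_le (by linarith) ((abs_sub _ _).trans ?_)
  rw [abs_of_pos hg₀]
  linarith

end fields

section energy

variable {ε R : ℝ}

lemma hasDerivAt_energy_comp (hε : 0 < ε) {α : ℝ → ℝ × ℝ} {t : ℝ}
    (hα : HasDerivAt α (clippedField ε R (α t)) t) :
    HasDerivAt (fun t => energy ε R (α t)) (-clip R (α t).2 ^ 2) t := by
  have hx : HasDerivAt (fun t => (α t).1) (clip R (α t).2) t := hα.fst
  have hy : HasDerivAt (fun t => (α t).2) (cutInvCube ε (α t).1 - clip R (α t).2) t := hα.snd
  exact (((hasDerivAt_clipPotential R _).comp t hy).add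
    ((hasDerivAt_potential hε _).comp t hx)).congr_deriv (by ring)

lemma sq_clip_le_two_mul_energy (hε : 0 < ε) (hR : 0 ≤ R) (p : ℝ × ℝ) :
    clip R p.2 ^ 2 ≤ 2 * energy ε R p := by
  have := sq_clip_le_two_mul_clipPotential hR p.2
  have := potential_nonneg hε p.1
  rw [energy]
  linarith

lemma energy_nonneg (hε : 0 < ε) (hR : 0 ≤ R) (p : ℝ × ℝ) : 0 ≤ energy ε R p := by
  linarith [sq_clip_le_two_mul_energy hε hR p, sq_nonneg (clip R p.2)]

lemma energy_of_le (hε : 0 < ε) {p : ℝ × ℝ} (hx : ε ≤ p.1) (hy : |p.2| ≤ R) :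
    energy ε R p = p.2 ^ 2 / 2 + (2 * p.1 ^ 2)⁻¹ := by
  rw [energy, clipPotential_of_abs_le hy, potential_of_le hε hx]

lemma lt_fst_and_clippedField_eq_of_energy_lt (hε : 0 < ε) (hR : 0 ≤ R) {p : ℝ × ℝ}
    (hεE : energy ε R p < (2 * ε ^ 2)⁻¹) (hRE : energy ε R p < R ^ 2 / 2) :
    ε < p.1 ∧ clippedField ε R p = field p := by
  have hΦ := sq_clip_le_two_mul_clipPotential hR p.2
  have hV := potential_nonneg hε p.1
  rw [energy] at hεE hRE
  have hx : ε < p.1 := by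
    by_contra! hx
    linarith [le_potential_of_le hε hx, sq_nonneg (clip R p.2)]
  have hy : clip R p.2 = p.2 := clip_of_abs_clip_lt (abs_lt_of_sq_lt_sq (by linarith) hR)
  refine ⟨hx, ?_⟩
  rw [clippedField, hy, cutField_of_le hx.le]

lemma energy_le_mul_exp_of_hasDerivAt (hε : 0 < ε) (hR : 0 ≤ R) {α : ℝ → ℝ × ℝ} {t₀ T : ℝ}
    (hα : ∀ t ∈ ball t₀ T, HasDerivAt α (clippedField ε R (α t)) t) {t : ℝ}
    (ht : t ∈ ball t₀ T) : energy ε R (α t) ≤ energy ε R (α t₀) * exp (2 * T) := by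
  have hball : ball t₀ T = Ioo (t₀ - T) (t₀ + T) := Real.ball_eq_Ioo _ _
  calc energy ε R (α t) ≤ energy ε R (α t₀) * exp (2 * |t - t₀|) :=
        le_mul_exp_abs_of_abs_hasDerivAt_le_mul
          (fun s hs => hasDerivAt_energy_comp hε (hα s (hball ▸ hs)))
          (fun s _ => by
            rw [abs_neg, abs_of_nonneg (sq_nonneg _)]
            exact sq_clip_le_two_mul_energy hε hR _)
          (hball ▸ mem_ball_self (dist_nonneg.trans_lt ht)) (hball ▸ ht)
    _ ≤ energy ε R (α t₀) * exp (2 * T) := by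
        have := energy_nonneg hε hR (α t₀)
        gcongr
        exact (mem_ball.1 ht).le

end energy

section solutions

lemma exists_pos_le_lt_inv_two_mul_sq {h₀ : ℝ} (hh₀ : 0 < h₀) {C : ℝ} (hC : 0 ≤ C) :
    ∃ ε, 0 < ε ∧ ε ≤ h₀ ∧ C < (2 * ε ^ 2)⁻¹ := by
  set ε := min h₀ (C + 1)⁻¹
  have hε : 0 < ε := lt_min hh₀ (by positivity)
  refine ⟨ε, hε, min_le_left _ _, ?_⟩
  have h1 : ε * (C + 1) ≤ 1 := calc
    ε * (C + 1) ≤ (C + 1)⁻¹ * (C + 1) := by gcongr; exact min_le_right _ _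
    _ = 1 := inv_mul_cancel₀ (by positivity)
  have h2 : (ε * (C + 1)) ^ 2 ≤ 1 := pow_le_one₀ (by positivity) h1
  rw [← one_div, lt_div_iff₀ (by positivity)]
  nlinarith [mul_pos hε hε]

theorem exists_field_solution_on_ball (t₀ : ℝ) {h₀ : ℝ} (hh₀ : 0 < h₀) (h₁ : ℝ) {T : ℝ}
    (hT : 0 < T) : ∃ α : ℝ → ℝ × ℝ, α t₀ = (h₀, h₁) ∧
      ∀ t ∈ ball t₀ T, HasDerivAt α (field (α t)) t ∧ 0 < (α t).1 := by
  set C := (h₁ ^ 2 / 2 + (2 * h₀ ^ 2)⁻¹) * exp (2 * T)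
  have hC : 0 ≤ C := by positivity
  obtain ⟨ε, hε, hεh₀, hεC⟩ := exists_pos_le_lt_inv_two_mul_sq hh₀ hC
  obtain ⟨R, hR, hRC⟩ : ∃ R, |h₁| ≤ R ∧ C < R ^ 2 / 2 :=
    ⟨|h₁| + C + 1, by linarith, by nlinarith [abs_nonneg h₁]⟩
  have hR₀ : 0 ≤ R := (abs_nonneg h₁).trans hR
  obtain ⟨K, hK⟩ := exists_lipschitzWith_clippedField hε R
  obtain ⟨α, hα₀, hα⟩ := exists_forall_mem_ball_hasDerivAt_of_lipschitzWith hK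
    (norm_clippedField_le hε hR₀) t₀ (h₀, h₁) hT.le
  refine ⟨α, hα₀, fun t ht => ?_⟩
  have hE : energy ε R (α t) ≤ C := by
    have := energy_le_mul_exp_of_hasDerivAt hε hR₀ hα ht
    rwa [hα₀, energy_of_le (p := (h₀, h₁)) hε hεh₀ hR] at this
  obtain ⟨hx, heq⟩ :=
    lt_fst_and_clippedField_eq_of_energy_lt hε hR₀ (hE.trans_lt hεC) (hE.trans_lt hRC)
  exact ⟨heq ▸ hα t ht, hε.trans hx⟩

theorem eqOn_ball_of_hasDerivAt_field {f g : ℝ → ℝ × ℝ} {t₀ T : ℝ}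
    (hf : ∀ t ∈ ball t₀ T, HasDerivAt f (field (f t)) t ∧ 0 < (f t).1)
    (hg : ∀ t ∈ ball t₀ T, HasDerivAt g (field (g t)) t ∧ 0 < (g t).1)
    (h : f t₀ = g t₀) : EqOn f g (ball t₀ T) := by
  intro τ hτ
  obtain ⟨r, hτr, hrT⟩ := exists_between (mem_ball.1 hτ)
  have hr : 0 < r := dist_nonneg.trans_lt hτr
  have hsub : Icc (t₀ - r) (t₀ + r) ⊆ ball t₀ T :=
    Real.closedBall_eq_Icc ▸ closedBall_subset_ball hrT
  have hfc : ContinuousOn f (Icc (t₀ - r) (t₀ + r)) :=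
    HasDerivAt.continuousOn fun t ht => (hf t (hsub ht)).1
  have hgc : ContinuousOn g (Icc (t₀ - r) (t₀ + r)) :=
    HasDerivAt.continuousOn fun t ht => (hg t (hsub ht)).1
  obtain ⟨c, hc, hcmin⟩ := isCompact_Icc.exists_isMinOn (nonempty_Icc.2 (by linarith))
    (hfc.fst.inf hgc.fst : ContinuousOn (fun t => min (f t).1 (g t).1) _)
  have hε : 0 < min (f c).1 (g c).1 := lt_min (hf c (hsub hc)).2 (hg c (hsub hc)).2
  obtain ⟨K, hK⟩ := exists_lipschitzOnWith_field hε
  have hmin : ∀ t ∈ Ioo (t₀ - r) (t₀ + r), min (f c).1 (g c).1 ≤ min (f t).1 (g t).1 :=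
    fun t ht => isMinOn_iff.1 hcmin t (Ioo_subset_Icc_self ht)
  refine ODE_solution_unique_of_mem_Icc (v := fun _ => field)
    (s := fun _ => {p | min (f c).1 (g c).1 ≤ p.1}) (fun _ _ => hK)
    ⟨by linarith, by linarith⟩ hfc (fun t ht => (hf t (hsub (Ioo_subset_Icc_self ht))).1)
    (fun t ht => (hmin t ht).trans (min_le_left _ _)) hgc
    (fun t ht => (hg t (hsub (Ioo_subset_Icc_self ht))).1)
    (fun t ht => (hmin t ht).trans (min_le_right _ _)) h ?_
  rw [← Real.closedBall_eq_Icc]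
  exact mem_closedBall.2 hτr.le

theorem exists_field_solution (t₀ : ℝ) {h₀ : ℝ} (hh₀ : 0 < h₀) (h₁ : ℝ) :
    ∃ α : ℝ → ℝ × ℝ, α t₀ = (h₀, h₁) ∧ ∀ t, HasDerivAt α (field (α t)) t ∧ 0 < (α t).1 :=
  exists_forall_hasDerivAt_of_forall_ball (s := {p | 0 < p.1})
    (fun _ _ _ hf hg h => eqOn_ball_of_hasDerivAt_field hf hg h)
    (fun _ hT => exists_field_solution_on_ball t₀ hh₀ h₁ hT)

theorem eq_of_hasDerivAt_field {f g : ℝ → ℝ × ℝ} {t₀ : ℝ}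
    (hf : ∀ t, HasDerivAt f (field (f t)) t ∧ 0 < (f t).1)
    (hg : ∀ t, HasDerivAt g (field (g t)) t ∧ 0 < (g t).1) (h : f t₀ = g t₀) : f = g :=
  funext fun t => eqOn_ball_of_hasDerivAt_field (T := dist t t₀ + 1) (fun s _ => hf s)
    (fun s _ => hg s) h (by simp [mem_ball])

theorem hasDerivAt_field_of_ode {k : ℝ → ℝ} (hk : ∀ t, 0 < k t)
    (hk₁ : ∀ t, DifferentiableAt ℝ k t) (hk₂ : ∀ t, DifferentiableAt ℝ (deriv k) t)
    (hode : ∀ t, k t ^ 3 * (deriv (deriv k) t + deriv k t) = 1) (t : ℝ) :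
    HasDerivAt (fun t => (k t, deriv k t)) (field (k t, deriv k t)) t ∧ 0 < k t := by
  have h2 : deriv (deriv k) t = (k t ^ 3)⁻¹ - deriv k t :=
    eq_sub_of_add_eq (eq_inv_of_mul_eq_one_right (hode t))
  refine ⟨?_, hk t⟩
  rw [field, ← h2]
  exact (hk₁ t).hasDerivAt.prodMk (hk₂ t).hasDerivAt

end solutions

end InvCubeODE

/-- For any initial data `t₀ ∈ ℝ`, `h₀ > 0`, `h₁ ∈ ℝ`, there exists a unique
solution `h : ℝ → ℝ`, defined and positive on all of `ℝ`, of the differential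
equation `h³ (h'' + h') = 1` with `h t₀ = h₀` and `h' t₀ = h₁`. -/
theorem stmt_0 (t₀ h₀ h₁ : ℝ) (hh₀ : 0 < h₀) :
    ∃! h : ℝ → ℝ,
      (∀ t, 0 < h t) ∧
      (∀ t, DifferentiableAt ℝ h t) ∧
      (∀ t, DifferentiableAt ℝ (deriv h) t) ∧
      (∀ t, (h t) ^ 3 * (deriv (deriv h) t + deriv h t) = 1) ∧
      h t₀ = h₀ ∧ deriv h t₀ = h₁ := by
  obtain ⟨α, hα₀, hα⟩ := InvCubeODE.exists_field_solution t₀ hh₀ h₁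
  have hx : ∀ t, HasDerivAt (fun t => (α t).1) (α t).2 t := fun t => (hα t).1.fst
  have hy : ∀ t, HasDerivAt (fun t => (α t).2) (((α t).1 ^ 3)⁻¹ - (α t).2) t :=
    fun t => (hα t).1.snd
  have hderiv : deriv (fun t => (α t).1) = fun t => (α t).2 := funext fun t => (hx t).deriv
  refine ⟨fun t => (α t).1,
    ⟨fun t => (hα t).2, fun t => (hx t).differentiableAt, ?_, ?_, ?_, ?_⟩, ?_⟩
  · rw [hderiv]
    exact fun t => (hy t).differentiableAt
  · intro t
    rw [hderiv, (hy t).deriv, sub_add_cancel]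
    exact mul_inv_cancel₀ (pow_pos (hα t).2 3).ne'
  · simp [hα₀]
  · simp [hderiv, hα₀]
  · rintro k ⟨hk, hk₁, hk₂, hode, hkt₀, hk't₀⟩
    have := InvCubeODE.eq_of_hasDerivAt_field (t₀ := t₀)
      (InvCubeODE.hasDerivAt_field_of_ode hk hk₁ hk₂ hode) hα (by simp [hα₀, hkt₀, hk't₀])
    funext t
    exact congrArg Prod.fst (congrFun this t)
end

section
/- Let (x(t), y(t)), t ∈ [t₀,∞), solve x' = y, y' = x⁻³ − y with x(t) > 0. Then there exists T ≥ t₀ such that for all t ≥ s ≥ T, √2·(t + c(s))^{1/4} ≤ x(t) ≤ y(s) + √2·(t + c(s))^{1/4}, where c(s) = x(s)⁴/4 − s. -/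
open Set Real Filter Topology

/-!
Let `w = x³y - 1`. Along solutions `(eᵗ w)' = 3 eᵗ x² y² ≥ 0`, so `w` stays nonnegative once it
is, and `x³y ≥ 1/2` eventually. If `w < 0` forever, then `x⁴/4 - t` (whose derivative is `w`)
decreases, so `x⁴ = O(t)` and `w' = 3x²y² - w ≥ 3(x³y)²/x⁴` is bounded below by a multiple of
`1/t`: `w` grows like `log t`, absurd. From a time with `w ≥ 0` on, `x⁴/4 - t` increases, which
is the lower bound `x ≥ φ` for `φ = √2 (t + c(s))^{1/4}`, the solution of `φ' = φ⁻³` with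
`φ(s) = x(s)`. Then `(x + y - φ)' = x⁻³ - φ⁻³ ≤ 0`, which gives the upper bound.
-/

lemma monotoneOn_Ici_of_hasDerivAt_nonneg {f f' : ℝ → ℝ} {a : ℝ}
    (hf : ∀ t ∈ Ici a, HasDerivAt f (f' t) t) (hf' : ∀ t ∈ Ici a, 0 ≤ f' t) :
    MonotoneOn f (Ici a) :=
  monotoneOn_of_hasDerivWithinAt_nonneg (convex_Ici a)
    (fun t ht => (hf t ht).continuousAt.continuousWithinAt)
    (fun t ht => (hf t (interior_subset ht)).hasDerivWithinAt)
    (fun t ht => hf' t (interior_subset ht))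

lemma antitoneOn_Ici_of_hasDerivAt_nonpos {f f' : ℝ → ℝ} {a : ℝ}
    (hf : ∀ t ∈ Ici a, HasDerivAt f (f' t) t) (hf' : ∀ t ∈ Ici a, f' t ≤ 0) :
    AntitoneOn f (Ici a) :=
  antitoneOn_of_hasDerivWithinAt_nonpos (convex_Ici a)
    (fun t ht => (hf t ht).continuousAt.continuousWithinAt)
    (fun t ht => (hf t (interior_subset ht)).hasDerivWithinAt)
    (fun t ht => hf' t (interior_subset ht))

lemma sqrt_two_pow_four : √2 ^ 4 = 4 := by
  rw [show 4 = 2 * 2 from rfl, pow_mul, sq_sqrt zero_le_two]; norm_num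

/-- `(4 (t + c))^{1/4}`, the solution of the equation `x' = x⁻³` obtained by dropping `x''`. -/
noncomputable def reducedSolution (c t : ℝ) : ℝ := √2 * (t + c) ^ (1 / 4 : ℝ)

lemma reducedSolution_nonneg {c t : ℝ} (h : 0 ≤ t + c) : 0 ≤ reducedSolution c t := by
  unfold reducedSolution; positivity

lemma reducedSolution_pos {c t : ℝ} (h : 0 < t + c) : 0 < reducedSolution c t :=
  mul_pos (by positivity) (rpow_pos_of_pos h _)

lemma reducedSolution_pow_four {c t : ℝ} (h : 0 ≤ t + c) :
    reducedSolution c t ^ 4 = 4 * (t + c) := by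
  rw [reducedSolution, mul_pow, sqrt_two_pow_four, ← rpow_natCast, ← rpow_mul h]
  norm_num

lemma reducedSolution_le_of_pow_four_le {c t b : ℝ} (h : 0 ≤ t + c) (hb : 0 ≤ b)
    (hcb : 4 * (t + c) ≤ b ^ 4) : reducedSolution c t ≤ b := by
  rwa [← pow_le_pow_iff_left₀ (reducedSolution_nonneg h) hb four_ne_zero,
    reducedSolution_pow_four h]

lemma hasDerivAt_reducedSolution {c t : ℝ} (h : 0 < t + c) :
    HasDerivAt (reducedSolution c) (reducedSolution c t ^ 3)⁻¹ t := by
  have hd := (((hasDerivAt_id t).add_const c).rpow_const (p := 1 / 4) (Or.inl h.ne')).const_mul √2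
  refine hd.congr_deriv ?_
  set p := (t + c) ^ (1 / 4 : ℝ) with hp
  have hp0 : 0 < p := rpow_pos_of_pos h _
  have hp4 : t + c = p ^ 4 := by
    rw [hp, ← rpow_natCast, ← rpow_mul h.le]; norm_num
  simp only [id, one_mul, rpow_sub_one h.ne', reducedSolution, ← hp]
  rw [hp4]
  field_simp
  exact sqrt_two_pow_four

lemma add_pow_four_div_four_sub_pos {a s t : ℝ} (ha : 0 < a) (hst : s ≤ t) :
    0 < t + (a ^ 4 / 4 - s) := by
  have := pow_pos ha 4
  linarith

structure IsInvCubeSolution (t₀ : ℝ) (x y : ℝ → ℝ) : Prop where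
  pos : ∀ t ∈ Ici t₀, 0 < x t
  hasDerivAt_x : ∀ t ∈ Ici t₀, HasDerivAt x (y t) t
  hasDerivAt_y : ∀ t ∈ Ici t₀, HasDerivAt y ((x t ^ 3)⁻¹ - y t) t

namespace IsInvCubeSolution

variable {t₀ : ℝ} {x y : ℝ → ℝ}

lemma hasDerivAt_x_pow_three_mul_y (h : IsInvCubeSolution t₀ x y) {t : ℝ}
    (ht : t ∈ Ici t₀) :
    HasDerivAt (fun τ => x τ ^ 3 * y τ) (3 * x t ^ 2 * y t ^ 2 + 1 - x t ^ 3 * y t) t := by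
  refine (((h.hasDerivAt_x t ht).pow 3).mul (h.hasDerivAt_y t ht)).congr_deriv ?_
  have := (h.pos t ht).ne'
  simp only [Pi.pow_apply]
  field_simp
  ring

lemma hasDerivAt_x_pow_four_div_four_sub (h : IsInvCubeSolution t₀ x y) {t : ℝ}
    (ht : t ∈ Ici t₀) :
    HasDerivAt (fun τ => x τ ^ 4 / 4 - τ) (x t ^ 3 * y t - 1) t := by
  refine ((((h.hasDerivAt_x t ht).pow 4).div_const 4).sub (hasDerivAt_id t)).congr_deriv ?_
  push_cast
  ring

lemma monotoneOn_exp_mul_x_pow_three_mul_y_sub_one (h : IsInvCubeSolution t₀ x y) :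
    MonotoneOn (fun t => exp t * (x t ^ 3 * y t - 1)) (Ici t₀) := by
  refine monotoneOn_Ici_of_hasDerivAt_nonneg
    (f' := fun t => exp t * (3 * x t ^ 2 * y t ^ 2)) (fun t ht => ?_) (fun t _ => by positivity)
  refine ((hasDerivAt_exp t).mul ((h.hasDerivAt_x_pow_three_mul_y ht).sub_const 1)).congr_deriv ?_
  ring

lemma one_le_x_pow_three_mul_y_of_le (h : IsInvCubeSolution t₀ x y) {T t : ℝ}
    (hT : T ∈ Ici t₀) (hT1 : 1 ≤ x T ^ 3 * y T) (hTt : T ≤ t) : 1 ≤ x t ^ 3 * y t := by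
  have hW := h.monotoneOn_exp_mul_x_pow_three_mul_y_sub_one hT (le_trans hT hTt) hTt
  have := (mul_nonneg (exp_pos T).le (sub_nonneg.2 hT1)).trans hW
  linarith [(mul_nonneg_iff_of_pos_left (exp_pos t)).1 this]

lemma eventually_half_le_x_pow_three_mul_y (h : IsInvCubeSolution t₀ x y) :
    ∀ᶠ t in atTop, 1 / 2 ≤ x t ^ 3 * y t := by
  set W₀ := exp t₀ * (x t₀ ^ 3 * y t₀ - 1)
  have hlim : Tendsto (fun t => W₀ * exp (-t)) atTop (𝓝 0) := by
    simpa using tendsto_exp_neg_atTop_nhds_zero.const_mul W₀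
  filter_upwards [hlim.eventually (lt_mem_nhds (show (-1 / 2 : ℝ) < 0 by norm_num)),
    eventually_ge_atTop t₀] with t hsmall ht
  have hW : W₀ ≤ exp t * (x t ^ 3 * y t - 1) :=
    h.monotoneOn_exp_mul_x_pow_three_mul_y_sub_one self_mem_Ici ht ht
  have : W₀ * exp (-t) ≤ x t ^ 3 * y t - 1 := by
    rwa [exp_neg, ← div_eq_mul_inv, div_le_iff₀ (exp_pos t), mul_comm]
  linarith

lemma x_pow_four_le_of_forall_lt_one (h : IsInvCubeSolution t₀ x y)
    (hw : ∀ t ∈ Ici t₀, x t ^ 3 * y t < 1) {t : ℝ} (ht : t ∈ Ici t₀) :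
    x t ^ 4 ≤ 4 * (t + (x t₀ ^ 4 / 4 - t₀)) := by
  have := antitoneOn_Ici_of_hasDerivAt_nonpos
    (fun τ hτ => h.hasDerivAt_x_pow_four_div_four_sub hτ) (fun τ hτ => by linarith [hw τ hτ])
    self_mem_Ici ht ht
  linarith

lemma exists_one_le_x_pow_three_mul_y (h : IsInvCubeSolution t₀ x y) :
    ∃ T ∈ Ici t₀, 1 ≤ x T ^ 3 * y T := by
  by_contra! hw
  set c := x t₀ ^ 4 / 4 - t₀
  have hc : ∀ t ∈ Ici t₀, 0 < t + c :=
    fun t ht => add_pow_four_div_four_sub_pos (h.pos t₀ self_mem_Ici) ht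
  obtain ⟨t₁, ht₁⟩ := eventually_atTop.1
    (h.eventually_half_le_x_pow_three_mul_y.and (eventually_ge_atTop t₀))
  -- `(x³y)' = 3x²y² + (1 - x³y) ≥ 3(x³y)²/x⁴ ≥ 3/(16(t + c))`, which is not integrable
  have hmono : MonotoneOn (fun t => x t ^ 3 * y t - 3 / 16 * log (t + c)) (Ici t₁) := by
    refine monotoneOn_Ici_of_hasDerivAt_nonneg (fun t ht =>
      (h.hasDerivAt_x_pow_three_mul_y (ht₁ t ht).2).sub
        ((((hasDerivAt_id t).add_const c).log (hc t (ht₁ t ht).2).ne').const_mul _))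
      (fun t ht => ?_)
    obtain ⟨hhalf, ht₀⟩ := ht₁ t ht
    have hx4 : x t ^ 4 ≤ 4 * (t + c) := h.x_pow_four_le_of_forall_lt_one hw ht₀
    have hsq : 1 / 4 ≤ (x t ^ 3 * y t) ^ 2 := by nlinarith
    have key : (t + c)⁻¹ ≤ 16 * (x t ^ 2 * y t ^ 2) := by
      rw [inv_le_iff_one_le_mul₀' (hc t ht₀)]
      nlinarith [mul_le_mul_of_nonneg_right hx4 (sq_nonneg (x t * y t))]
    simp only [id, one_div]
    nlinarith [hw t ht₀]
  have hbdd : ∀ t ∈ Ici t₁, log (t + c) < 8 / 3 + log (t₁ + c) := by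
    intro t ht
    have := hmono self_mem_Ici ht ht
    have := (ht₁ t₁ le_rfl).1
    linarith [hw t (ht₁ t ht).2]
  have hlog : Tendsto (fun t => log (t + c)) atTop atTop :=
    tendsto_log_atTop.comp (tendsto_atTop_add_const_right _ c tendsto_id)
  obtain ⟨t, hlarge, ht⟩ :=
    ((hlog.eventually_gt_atTop (8 / 3 + log (t₁ + c))).and (eventually_ge_atTop t₁)).exists
  exact (hbdd t ht).not_gt hlarge

lemma reducedSolution_le_x (h : IsInvCubeSolution t₀ x y) {s t : ℝ} (hs : s ∈ Ici t₀)
    (hw : ∀ τ ∈ Ici s, 1 ≤ x τ ^ 3 * y τ) (hst : s ≤ t) :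
    reducedSolution (x s ^ 4 / 4 - s) t ≤ x t := by
  have hu := monotoneOn_Ici_of_hasDerivAt_nonneg
    (fun τ hτ => h.hasDerivAt_x_pow_four_div_four_sub (Ici_subset_Ici.2 hs hτ))
    (fun τ hτ => sub_nonneg.2 (hw τ hτ)) self_mem_Ici hst hst
  exact reducedSolution_le_of_pow_four_le
    (add_pow_four_div_four_sub_pos (h.pos s hs) hst).le (h.pos t (le_trans hs hst)).le
    (by linarith)

lemma x_le_y_add_reducedSolution (h : IsInvCubeSolution t₀ x y) {s t : ℝ} (hs : s ∈ Ici t₀)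
    (hw : ∀ τ ∈ Ici s, 1 ≤ x τ ^ 3 * y τ) (hst : s ≤ t) :
    x t ≤ y s + reducedSolution (x s ^ 4 / 4 - s) t := by
  set c := x s ^ 4 / 4 - s
  have hc : ∀ τ ∈ Ici s, 0 < τ + c :=
    fun τ hτ => add_pow_four_div_four_sub_pos (h.pos s hs) hτ
  have hg : AntitoneOn (fun τ => x τ + y τ - reducedSolution c τ) (Ici s) := by
    refine antitoneOn_Ici_of_hasDerivAt_nonpos (fun τ hτ =>
      ((h.hasDerivAt_x τ (Ici_subset_Ici.2 hs hτ)).add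
        (h.hasDerivAt_y τ (Ici_subset_Ici.2 hs hτ))).sub (hasDerivAt_reducedSolution (hc τ hτ)))
      (fun τ hτ => ?_)
    have hφ := reducedSolution_pos (hc τ hτ)
    have := inv_anti₀ (pow_pos hφ 3)
      (pow_le_pow_left₀ hφ.le (h.reducedSolution_le_x hs hw hτ) 3)
    linarith
  have hφs : reducedSolution c s = x s :=
    (pow_left_inj₀ (reducedSolution_nonneg (hc s self_mem_Ici).le) (h.pos s hs).le
      four_ne_zero).1 (by rw [reducedSolution_pow_four (hc s self_mem_Ici).le]; ring)
  have hyt : 0 < y t := (mul_pos_iff_of_pos_left (pow_pos (h.pos t (le_trans hs hst)) 3)).1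
    (by linarith [hw t hst])
  have := hg self_mem_Ici hst hst
  simp only [hφs] at this
  linarith

end IsInvCubeSolution

/-- If `(x(t), y(t))`, `t ∈ [t₀,∞)`, solves `x' = y`, `y' = x⁻³ − y` with `x > 0`,
then there is `T ≥ t₀` such that for all `t ≥ s ≥ T`,
`√2 (t + c(s))^{1/4} ≤ x(t) ≤ y(s) + √2 (t + c(s))^{1/4}` with `c(s) = x(s)⁴/4 − s`. -/
theorem stmt_2 (t₀ : ℝ) (x y : ℝ → ℝ)
    (hx_pos : ∀ t ∈ Ici t₀, 0 < x t)
    (hx : ∀ t ∈ Ici t₀, HasDerivAt x (y t) t)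
    (hy : ∀ t ∈ Ici t₀, HasDerivAt y ((x t ^ 3)⁻¹ - y t) t) :
    ∃ T ∈ Ici t₀, ∀ s t : ℝ, T ≤ s → s ≤ t →
      Real.sqrt 2 * (t + (x s ^ 4 / 4 - s)) ^ ((1 : ℝ) / 4) ≤ x t ∧
      x t ≤ y s + Real.sqrt 2 * (t + (x s ^ 4 / 4 - s)) ^ ((1 : ℝ) / 4) := by
  have h : IsInvCubeSolution t₀ x y := ⟨hx_pos, hx, hy⟩
  obtain ⟨T, hT, hT1⟩ := h.exists_one_le_x_pow_three_mul_y
  refine ⟨T, hT, fun s t hs hst => ?_⟩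
  have hs₀ : s ∈ Ici t₀ := le_trans hT hs
  have hw : ∀ τ ∈ Ici s, 1 ≤ x τ ^ 3 * y τ :=
    fun τ hτ => h.one_le_x_pow_three_mul_y_of_le hT hT1 (le_trans hs hτ)
  exact ⟨h.reducedSolution_le_x hs₀ hw hst, h.x_le_y_add_reducedSolution hs₀ hw hst⟩
end

section
/- Let g be the left maximal solution of (1 − (3/4)z·g(z) − z²·g'(z))·g(z) = 1 with g(z₀) = g₀, where z₀ > 0 and g₀ > 0. Then g is defined and positive on (0, z₀], and lim_{z→0⁺} g(z) = 1. -/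
/-!
Write the equation as `z² g' = 1 - 1/g - (3/4) z g`. Where `0 < g < 1` the right-hand side is
negative, so moving left from `z₀` the solution never drops below `min 1 g₀`; and along a solution
`g⁴ z³ + (8/27) z²` is nondecreasing, so `g⁴ z³` stays bounded. On `(γ, z₀]` with `γ > 0` the
solution therefore stays in a compact region where the equation is Lipschitz, and Picard–Lindelöf
continues it past `γ`, contradicting maximality.

Near `0` the bound gives `z g → 0`, so `z² g'` is bounded below by a positive constant where
`g > 1 + ε` and above by a negative one where `g < 1 - ε`. As `∫ dz / z²` diverges at `0`, the
solution cannot stay in either region all the way down to `0`, and once it is in `[1 - ε, 1 + ε]`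
the same signs keep it there.
-/

open Set Filter Topology NNReal

theorem monotoneOn_of_forall_hasDerivAt_nonneg {D : Set ℝ} (hD : Convex ℝ D)
    {f f' : ℝ → ℝ} (hf : ∀ x ∈ D, HasDerivAt f (f' x) x) (hf' : ∀ x ∈ D, 0 ≤ f' x) :
    MonotoneOn f D :=
  monotoneOn_of_hasDerivWithinAt_nonneg hD
    (fun x hx ↦ (hf x hx).continuousAt.continuousWithinAt)
    (fun x hx ↦ (hf x (interior_subset hx)).hasDerivWithinAt)
    (fun x hx ↦ hf' x (interior_subset hx))

theorem lt_of_lt_of_deriv_neg_below {f f' : ℝ → ℝ} {a b c : ℝ} (hab : a ≤ b)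
    (hf : ∀ x ∈ Icc a b, HasDerivAt f (f' x) x) (hf' : ∀ x ∈ Ico a b, f x < c → f' x < 0)
    (ha : f a < c) : f b < c := by
  have hle := image_le_of_deriv_right_lt_deriv_boundary' (B := fun _ ↦ f a) (B' := 0)
    (fun x hx ↦ (hf x hx).continuousAt.continuousWithinAt)
    (fun x hx ↦ (hf x (Ico_subset_Icc_self hx)).hasDerivWithinAt) le_rfl continuousOn_const
    (fun _ _ ↦ hasDerivWithinAt_const _ _ _) (fun x hx hfx ↦ hf' x hx (hfx ▸ ha))
    (right_mem_Icc.2 hab)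
  exact hle.trans_lt ha

theorem lt_of_lt_of_deriv_pos_above {f f' : ℝ → ℝ} {a b c : ℝ} (hab : a ≤ b)
    (hf : ∀ x ∈ Icc a b, HasDerivAt f (f' x) x) (hf' : ∀ x ∈ Ico a b, c < f x → 0 < f' x)
    (ha : c < f a) : c < f b := by
  have := lt_of_lt_of_deriv_neg_below (f := -f) (f' := -f') (c := -c) hab
    (fun x hx ↦ (hf x hx).neg) (fun x hx hfx ↦ neg_neg_of_pos (hf' x hx (by simpa using hfx)))
    (by simpa using ha)
  simpa using this

/-- Integrating `f' ≥ c / z²` from `z` to `b` gives `f z ≤ f b + c / b - c / z`. -/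
theorem exists_lt_of_div_sq_le_deriv {f f' : ℝ → ℝ} {b c : ℝ} (hb : 0 < b) (hc : 0 < c)
    (hf : ∀ z ∈ Ioc 0 b, HasDerivAt f (f' z) z) (hf' : ∀ z ∈ Ioc 0 b, c / z ^ 2 ≤ f' z)
    (L : ℝ) : ∃ z ∈ Ioc 0 b, f z < L := by
  have hmono : MonotoneOn (fun z ↦ f z + c * z⁻¹) (Ioc 0 b) :=
    monotoneOn_of_forall_hasDerivAt_nonneg (convex_Ioc 0 b)
      (fun z hz ↦ (hf z hz).add ((hasDerivAt_inv hz.1.ne').const_mul c))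
      (fun z hz ↦ by have := hf' z hz; rw [div_eq_mul_inv] at this; linarith)
  have hlarge : ∀ᶠ z in 𝓝[>] 0, f b + c * b⁻¹ - L < c * z⁻¹ :=
    (tendsto_inv_nhdsGT_zero.const_mul_atTop hc).eventually_gt_atTop _
  obtain ⟨z, hz, hzb⟩ := (hlarge.and (Ioc_mem_nhdsGT hb)).exists
  refine ⟨z, hzb, ?_⟩
  have := hmono hzb (right_mem_Ioc.2 hb) hzb.2
  simp only at this
  linarith

theorem exists_eqOn_forall_hasDerivAt_of_lipschitzWith {v : ℝ → ℝ → ℝ} {K : ℝ≥0}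
    {L : ℝ} (hlip : ∀ t, LipschitzWith K (v t)) (hcont : ∀ x, Continuous (v · x))
    (hbound : ∀ t x, |v t x| ≤ L) {g : ℝ → ℝ} {a b ε : ℝ} (hε : 0 < ε) (hεa : b - ε < a)
    (hg : ∀ t ∈ Ioc a b, HasDerivAt g (v t (g t)) t) :
    ∃ f : ℝ → ℝ, EqOn f g (Ioc a b) ∧
      ∀ t ∈ Ioo (b - ε) (b + ε), HasDerivAt f (v t (f t)) t := by
  have hPL : IsPicardLindelof v (tmin := b - ε) (tmax := b + ε)
      ⟨b, by constructor <;> linarith⟩ (g b) (L.toNNReal * ε.toNNReal) 0 L.toNNReal K :=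
    { lipschitzOnWith := fun t _ ↦ (hlip t).lipschitzOnWith
      continuousOn := fun x _ ↦ (hcont x).continuousOn
      norm_le := fun t _ x _ ↦ (hbound t x).trans (Real.le_coe_toNNReal L)
      mul_max_le := by simp [hε.le] }
  obtain ⟨f, hfb, hf⟩ := hPL.exists_eq_forall_mem_Icc_hasDerivWithinAt₀
  have hf' : ∀ t ∈ Ioo (b - ε) (b + ε), HasDerivAt f (v t (f t)) t := fun t ht ↦
    (hf t (Ioo_subset_Icc_self ht)).hasDerivAt (Icc_mem_nhds ht.1 ht.2)
  refine ⟨f, fun t ht ↦ ?_, hf'⟩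
  have hsub : Icc t b ⊆ Ioo (b - ε) (b + ε) := fun s hs ↦
    ⟨by linarith [ht.1, hs.1], by linarith [hs.2]⟩
  have hsubg : Icc t b ⊆ Ioc a b := fun s hs ↦ ⟨ht.1.trans_le hs.1, hs.2⟩
  refine ODE_solution_unique_of_mem_Icc_left (s := fun _ ↦ univ)
    (fun t _ ↦ (hlip t).lipschitzOnWith)
    (fun s hs ↦ (hf' s (hsub hs)).continuousAt.continuousWithinAt)
    (fun s hs ↦ (hf' s (hsub (Ioc_subset_Icc_self hs))).hasDerivWithinAt)
    (fun _ _ ↦ mem_univ _)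
    (fun s hs ↦ (hg s (hsubg hs)).continuousAt.continuousWithinAt)
    (fun s hs ↦ (hg s (hsubg (Ioc_subset_Icc_self hs))).hasDerivWithinAt)
    (fun _ _ ↦ mem_univ _) hfb ⟨le_rfl, ht.2⟩

namespace ReducedODE

noncomputable def rhs (z x : ℝ) : ℝ := (1 - x⁻¹ - 3 / 4 * z * x) / z ^ 2

def IsSolOn (g : ℝ → ℝ) (s : Set ℝ) : Prop :=
  ∀ z ∈ s, DifferentiableAt ℝ g z ∧ (1 - 3 / 4 * z * g z - z ^ 2 * deriv g z) * g z = 1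

theorem eq_one_iff_eq_rhs {z x y : ℝ} (hz : z ≠ 0) :
    (1 - 3 / 4 * z * x - z ^ 2 * y) * x = 1 ↔ x ≠ 0 ∧ y = rhs z x := by
  constructor
  · intro h
    have hx : x ≠ 0 := by rintro rfl; simp at h
    refine ⟨hx, ?_⟩
    rw [rhs, eq_div_iff (pow_ne_zero 2 hz)]
    field_simp
    linarith
  · rintro ⟨hx, rfl⟩
    rw [rhs]
    field_simp
    ring

variable {g : ℝ → ℝ} {s : Set ℝ} {z γ b : ℝ}

theorem IsSolOn.mono {t : Set ℝ} (h : IsSolOn g s) (hts : t ⊆ s) : IsSolOn g t :=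
  fun z hz ↦ h z (hts hz)

theorem IsSolOn.ne_zero (h : IsSolOn g s) (hz : z ∈ s) : g z ≠ 0 := by
  intro h0
  simpa [h0] using (h z hz).2

theorem IsSolOn.hasDerivAt (h : IsSolOn g s) (hz : z ∈ s) (hz0 : z ≠ 0) :
    HasDerivAt g (rhs z (g z)) z := by
  obtain ⟨hd, heq⟩ := h z hz
  exact ((eq_one_iff_eq_rhs hz0).1 heq).2 ▸ hd.hasDerivAt

theorem isSolOn_of_hasDerivAt
    (h : ∀ z ∈ s, z ≠ 0 ∧ g z ≠ 0 ∧ HasDerivAt g (rhs z (g z)) z) : IsSolOn g s := by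
  intro z hz
  obtain ⟨hz0, hg0, hd⟩ := h z hz
  exact ⟨hd.differentiableAt, (eq_one_iff_eq_rhs hz0).2 ⟨hg0, hd.deriv⟩⟩

theorem IsSolOn.pos (h : IsSolOn g (Ioc γ b)) (hb : 0 < g b) : ∀ z ∈ Ioc γ b, 0 < g z := by
  intro z hz
  by_contra! hneg
  have hsub : Icc z b ⊆ Ioc γ b := fun w hw ↦ ⟨hz.1.trans_le hw.1, hw.2⟩
  obtain ⟨w, hw, hw0⟩ := intermediate_value_Icc hz.2
    (fun w hw ↦ (h w (hsub hw)).1.continuousAt.continuousWithinAt) ⟨hneg, hb.le⟩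
  exact h.ne_zero (hsub hw) hw0

theorem rhs_le {x a : ℝ} (hz : 0 < z) (hx : 0 < x) (hxa : x ≤ a) :
    rhs z x ≤ (1 - a⁻¹) / z ^ 2 := by
  have : a⁻¹ ≤ x⁻¹ := inv_anti₀ hx hxa
  unfold rhs
  refine div_le_div_of_nonneg_right ?_ (sq_nonneg z)
  nlinarith [mul_pos hz hx]

theorem rhs_neg {x : ℝ} (hz : 0 < z) (hx : 0 < x) (hx1 : x < 1) : rhs z x < 0 :=
  (rhs_le hz hx le_rfl).trans_lt <|
    div_neg_of_neg_of_pos (by linarith [one_lt_inv₀ hx |>.2 hx1]) (by positivity)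

theorem le_rhs {x a η : ℝ} (ha : 0 < a) (hax : a ≤ x) (hη : 3 / 4 * z * x ≤ η) :
    (1 - a⁻¹ - η) / z ^ 2 ≤ rhs z x := by
  have : x⁻¹ ≤ a⁻¹ := inv_anti₀ ha hax
  unfold rhs
  gcongr

theorem lipschitzOnWith_rhs {τ p : ℝ} (hτ : 0 < τ) (hτz : τ ≤ z) (hp : 0 < p) :
    LipschitzOnWith ((p ^ 2 * τ ^ 2)⁻¹ + 3 / (4 * τ)).toNNReal (rhs z) (Ici p) := by
  refine LipschitzOnWith.of_dist_le_mul fun x (hx : p ≤ x) y (hy : p ≤ y) ↦ ?_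
  have hz : 0 < z := hτ.trans_le hτz
  have hx0 : 0 < x := hp.trans_le hx
  have hy0 : 0 < y := hp.trans_le hy
  have hdiff : rhs z x - rhs z y = (x - y) * ((x * y * z ^ 2)⁻¹ - 3 / (4 * z)) := by
    unfold rhs
    field_simp
    ring
  have hxy : (x * y * z ^ 2)⁻¹ ≤ (p ^ 2 * τ ^ 2)⁻¹ := by
    gcongr
    nlinarith
  rw [Real.dist_eq, Real.dist_eq, hdiff, abs_mul, mul_comm,
    Real.coe_toNNReal _ (by positivity)]
  gcongr
  calc |(x * y * z ^ 2)⁻¹ - 3 / (4 * z)|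
      ≤ |(x * y * z ^ 2)⁻¹| + |3 / (4 * z)| := abs_sub _ _
    _ ≤ (p ^ 2 * τ ^ 2)⁻¹ + 3 / (4 * τ) := by
      have : 0 < x * y * z ^ 2 := by positivity
      rw [abs_of_pos (inv_pos.2 this), abs_of_pos (by positivity)]
      gcongr

theorem abs_rhs_le {τ p q x : ℝ} (hτ : 0 < τ) (hτz : τ ≤ z) (hp : 0 < p)
    (hx : x ∈ Icc p q) :
    |rhs z x| ≤ (1 + p⁻¹) / τ ^ 2 + 3 / 4 * q / τ := by
  have hz : 0 < z := hτ.trans_le hτz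
  have hx0 : 0 < x := hp.trans_le hx.1
  have hsplit : rhs z x = (1 - x⁻¹) / z ^ 2 - 3 / 4 * x / z := by
    unfold rhs
    field_simp
  have h1 : |1 - x⁻¹| ≤ 1 + p⁻¹ := by
    have : x⁻¹ ≤ p⁻¹ := inv_anti₀ hp hx.1
    rw [abs_le]
    constructor <;> linarith [inv_pos.2 hx0]
  rw [hsplit]
  calc |(1 - x⁻¹) / z ^ 2 - 3 / 4 * x / z|
      ≤ |(1 - x⁻¹) / z ^ 2| + |3 / 4 * x / z| := abs_sub _ _
    _ ≤ (1 + p⁻¹) / τ ^ 2 + 3 / 4 * q / τ := by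
      rw [abs_div, abs_div, abs_of_pos (by positivity : (0 : ℝ) < z ^ 2), abs_of_pos hz,
        abs_of_pos (by positivity : (0 : ℝ) < 3 / 4 * x)]
      have hq : 0 ≤ q := hx0.le.trans hx.2
      gcongr
      exact hx.2

theorem continuous_rhs_max {τ : ℝ} (hτ : 0 < τ) (x : ℝ) :
    Continuous fun t ↦ rhs (max τ t) x := by
  unfold rhs
  exact Continuous.div (by fun_prop) (by fun_prop)
    (fun t ↦ pow_ne_zero 2 (hτ.trans_le (le_max_left τ t)).ne')

theorem IsSolOn.forall_le_of_le (h : IsSolOn g (Ioc γ b)) (hγ : 0 ≤ γ) {a : ℝ} (ha : 0 < a)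
    (ha1 : a ≤ 1) (hb : a ≤ g b) : ∀ z ∈ Ioc γ b, a ≤ g z := by
  have hpos := h.pos (ha.trans_le hb)
  intro z hz
  by_contra! hlt
  have hsub : Icc z b ⊆ Ioc γ b := fun w hw ↦ ⟨hz.1.trans_le hw.1, hw.2⟩
  refine (lt_of_lt_of_deriv_neg_below hz.2
    (fun w hw ↦ h.hasDerivAt (hsub hw) (hγ.trans_lt (hsub hw).1).ne') (fun w hw hgw ↦ ?_)
    hlt).not_ge hb
  have hw := hsub (Ico_subset_Icc_self hw)
  exact rhs_neg (hγ.trans_lt hw.1) (hpos w hw) (hgw.trans_le ha1)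

/-- Along a solution, `(g⁴ z³)' = 4 z g² (g - 1) ≥ -(16/27) z`, because
`g³ - g² + 4/27 = (g - 2/3)² (g + 1/3)`. -/
theorem IsSolOn.pow_four_mul_pow_three_le (h : IsSolOn g (Ioc γ b)) (hγ : 0 ≤ γ)
    (hb : 0 < g b) : ∀ z ∈ Ioc γ b, g z ^ 4 * z ^ 3 ≤ g b ^ 4 * b ^ 3 + 8 / 27 * b ^ 2 := by
  have hpos := h.pos hb
  have hderiv : ∀ z ∈ Ioc γ b, HasDerivAt (fun z ↦ g z ^ 4 * z ^ 3 + 8 / 27 * z ^ 2)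
      (4 * z * (g z ^ 3 - g z ^ 2 + 4 / 27)) z := by
    intro z hz
    have hz0 : z ≠ 0 := (hγ.trans_lt hz.1).ne'
    have hg0 := h.ne_zero hz
    refine ((((h.hasDerivAt hz hz0).pow 4).mul (hasDerivAt_pow 3 z)).add
      ((hasDerivAt_pow 2 z).const_mul (8 / 27))).congr_deriv ?_
    simp only [rhs, Pi.pow_apply]
    field_simp
    ring
  have hmono : MonotoneOn (fun z ↦ g z ^ 4 * z ^ 3 + 8 / 27 * z ^ 2) (Ioc γ b) :=
    monotoneOn_of_forall_hasDerivAt_nonneg (convex_Ioc γ b) hderiv fun z hz ↦ by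
      have : 0 ≤ (g z - 2 / 3) ^ 2 * (g z + 1 / 3) := by have := hpos z hz; positivity
      nlinarith [hγ.trans_lt hz.1]
  intro z hz
  have := hmono hz (right_mem_Ioc.2 (hz.1.trans_le hz.2)) hz.2
  simp only at this
  nlinarith [sq_nonneg z]

theorem IsSolOn.bddAbove (h : IsSolOn g (Ioc γ b)) (hγ : 0 < γ) (hb : 0 < g b) :
    BddAbove (g '' Ioc γ b) := by
  set K := g b ^ 4 * b ^ 3 + 8 / 27 * b ^ 2
  refine ⟨1 + K / γ ^ 3, ?_⟩
  rintro _ ⟨z, hz, rfl⟩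
  have hK : 0 ≤ K := by have := hγ.trans (hz.1.trans_le hz.2); positivity
  rcases le_or_gt (g z) 1 with hg1 | hg1
  · linarith [div_nonneg hK (pow_nonneg hγ.le 3)]
  · have hγz : γ ^ 3 ≤ z ^ 3 := pow_le_pow_left₀ hγ.le hz.1.le 3
    have hg4 : g z ^ 4 * γ ^ 3 ≤ K :=
      (mul_le_mul_of_nonneg_left hγz (by positivity)).trans
        (h.pow_four_mul_pow_three_le hγ.le hb z hz)
    have : g z ≤ g z ^ 4 := le_self_pow₀ hg1.le (by norm_num)
    rw [← le_div_iff₀ (by positivity)] at hg4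
    linarith

/-- Clamping `t ≥ γ / 2` and `x ∈ [p / 2, q + 1]` makes `rhs` globally Lipschitz and bounded
without changing it along `g`, so Picard–Lindelöf continues `g` past `γ`; by continuity the
continuation still stays in the unclamped region a little to the left of `γ`. -/
theorem IsSolOn.exists_extension_of_mem_Icc (h : IsSolOn g (Ioc γ b)) (hγ : 0 < γ)
    (hγb : γ < b) {p q : ℝ} (hp : 0 < p) (hg : ∀ z ∈ Ioc γ b, g z ∈ Icc p q) :
    ∃ γ' < γ, ∃ f : ℝ → ℝ, EqOn f g (Ioc γ b) ∧ IsSolOn f (Ioc γ' b) := by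
  have hbmem : b ∈ Ioc γ b := right_mem_Ioc.2 hγb
  have hpq : p / 2 ≤ q + 1 := by linarith [(hg b hbmem).1, (hg b hbmem).2]
  set v : ℝ → ℝ → ℝ := fun t x ↦ rhs (max (γ / 2) t) (projIcc (p / 2) (q + 1) hpq x)
  have hv : ∀ t x, γ / 2 ≤ t → x ∈ Icc (p / 2) (q + 1) → v t x = rhs t x := fun t x ht hx ↦ by
    simp only [v, max_eq_right ht, projIcc_of_mem hpq hx]
  have hγ2 : 0 < γ / 2 := by positivity
  obtain ⟨f, hfg, hf⟩ := exists_eqOn_forall_hasDerivAt_of_lipschitzWith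
    (v := v) (g := g) (a := γ) (b := b) (ε := b)
    (fun t ↦ ((lipschitzOnWith_rhs hγ2 (le_max_left _ t) (half_pos hp)).mono
        Icc_subset_Ici_self).to_restrict.comp (LipschitzWith.projIcc hpq))
    (fun x ↦ continuous_rhs_max hγ2 _)
    (fun t x ↦ abs_rhs_le hγ2 (le_max_left _ t) (half_pos hp) (projIcc (p / 2) (q + 1) hpq x).2)
    (by linarith) (by linarith) fun t ht ↦ by
      rw [hv t _ (by linarith [ht.1]) ⟨by linarith [(hg t ht).1], by linarith [(hg t ht).2]⟩]
      exact h.hasDerivAt ht (hγ.trans ht.1).ne'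
  have hfγ : ContinuousAt f γ := (hf γ ⟨by linarith, by linarith⟩).continuousAt
  have hfγmem : f γ ∈ Icc p q := isClosed_Icc.mem_of_tendsto
    (hfγ.tendsto.mono_left nhdsWithin_le_nhds)
    (mem_of_superset (Ioc_mem_nhdsGT hγb) fun z hz ↦ by simpa [hfg hz] using hg z hz)
  have hnear : ∀ᶠ t in 𝓝[≤] γ, γ / 2 ≤ t ∧ f t ∈ Icc (p / 2) (q + 1) :=
    nhdsWithin_le_nhds <| (eventually_ge_nhds (by linarith)).and <|
      hfγ.eventually (Icc_mem_nhds (by linarith [hfγmem.1]) (by linarith [hfγmem.2]))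
  obtain ⟨γ', hγ', hγ'sub⟩ := mem_nhdsLE_iff_exists_Ioc_subset.1 hnear
  have hregion : ∀ t ∈ Ioc γ' b, γ / 2 ≤ t ∧ f t ∈ Icc (p / 2) (q + 1) := by
    intro t ht
    rcases le_or_gt t γ with htγ | htγ
    · exact hγ'sub ⟨ht.1, htγ⟩
    · have hgt := hg t ⟨htγ, ht.2⟩
      rw [hfg ⟨htγ, ht.2⟩]
      exact ⟨by linarith, by linarith [hgt.1], by linarith [hgt.2]⟩
  refine ⟨γ', hγ', f, hfg, isSolOn_of_hasDerivAt fun t ht ↦ ?_⟩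
  obtain ⟨ht2, hft⟩ := hregion t ht
  refine ⟨by linarith, by linarith [hft.1], ?_⟩
  rw [← hv t _ ht2 hft]
  exact hf t ⟨by linarith, by linarith [ht.2]⟩

theorem IsSolOn.exists_extension (h : IsSolOn g (Ioc γ b)) (hγ : 0 < γ) (hγb : γ < b)
    (hb : 0 < g b) : ∃ γ' < γ, ∃ f : ℝ → ℝ, EqOn f g (Ioc γ b) ∧ IsSolOn f (Ioc γ' b) := by
  obtain ⟨M, hM⟩ := h.bddAbove hγ hb
  have hlow := h.forall_le_of_le hγ.le (lt_min one_pos hb) (min_le_left _ _) (min_le_right _ _)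
  exact h.exists_extension_of_mem_Icc hγ hγb (lt_min one_pos hb) fun z hz ↦
    ⟨hlow z hz, hM (mem_image_of_mem g hz)⟩

theorem IsSolOn.eventually_lt (h : IsSolOn g (Ioc 0 b)) (hb0 : 0 < b) (hb : 0 < g b)
    {c : ℝ} (hc : 1 < c) : ∀ᶠ z in 𝓝[>] 0, g z < c := by
  have hpos := h.pos hb
  obtain ⟨a, ha1, hac⟩ := exists_between hc
  have ha0 : 0 < a := one_pos.trans ha1
  obtain ⟨η, hη, hηa⟩ : ∃ η > 0, 1 - a⁻¹ = 2 * η :=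
    ⟨(1 - a⁻¹) / 2, by linarith [inv_lt_one_of_one_lt₀ ha1], by ring⟩
  have hsmall : ∀ᶠ z in 𝓝[>] 0, z ≤ b ∧ 3 / 4 * z * g z ≤ η := by
    set K := g b ^ 4 * b ^ 3 + 8 / 27 * b ^ 2
    have hK : Tendsto (fun z ↦ K * z) (𝓝[>] 0) (𝓝 0) :=
      ((continuous_const_mul K).tendsto' 0 0 (mul_zero K)).mono_left nhdsWithin_le_nhds
    filter_upwards [Ioc_mem_nhdsGT hb0, hK.eventually (gt_mem_nhds (by positivity :
      (0 : ℝ) < (4 / 3 * η) ^ 4))] with z hz hKz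
    have hzg : (z * g z) ^ 4 < (4 / 3 * η) ^ 4 := calc
      (z * g z) ^ 4 = g z ^ 4 * z ^ 3 * z := by ring
      _ ≤ K * z := mul_le_mul_of_nonneg_right
        (h.pow_four_mul_pow_three_le le_rfl hb z hz) hz.1.le
      _ < (4 / 3 * η) ^ 4 := hKz
    have := lt_of_pow_lt_pow_left₀ 4 (by positivity) hzg
    exact ⟨hz.2, by linarith⟩
  obtain ⟨δ, hδ, hδsub⟩ := mem_nhdsGT_iff_exists_Ioc_subset.1 hsmall
  have hδb : Ioc 0 δ ⊆ Ioc 0 b := fun z hz ↦ ⟨hz.1, (hδsub hz).1⟩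
  have hrhs : ∀ z ∈ Ioc 0 δ, a < g z → η / z ^ 2 ≤ rhs z (g z) := fun z hz hgz ↦ by
    have := le_rhs ha0 hgz.le (hδsub hz).2
    rwa [hηa, show 2 * η - η = η by ring] at this
  obtain ⟨z₁, hz₁, hgz₁⟩ : ∃ z₁ ∈ Ioc 0 δ, g z₁ ≤ a := by
    by_contra! hgt
    obtain ⟨z, hz, hgz⟩ := exists_lt_of_div_sq_le_deriv hδ hη
      (fun z hz ↦ h.hasDerivAt (hδb hz) hz.1.ne') (fun z hz ↦ hrhs z hz (hgt z hz)) 0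
    exact (hpos z (hδb hz)).not_gt hgz
  have hz₁δ : Ioc 0 z₁ ⊆ Ioc 0 δ := Ioc_subset_Ioc_right hz₁.2
  filter_upwards [Ioc_mem_nhdsGT hz₁.1] with z hz
  by_contra! hcz
  have hsub : Icc z z₁ ⊆ Ioc 0 δ := fun w hw ↦ hz₁δ ⟨hz.1.trans_le hw.1, hw.2⟩
  refine hgz₁.not_gt (lt_of_lt_of_deriv_pos_above hz.2
    (fun w hw ↦ h.hasDerivAt (hδb (hsub hw)) (hsub hw).1.ne') (fun w hw hgw ↦ ?_)
    (hac.trans_le hcz))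
  have hw := hsub (Ico_subset_Icc_self hw)
  exact (div_pos hη (pow_pos hw.1 2)).trans_le (hrhs w hw hgw)

theorem IsSolOn.eventually_gt (h : IsSolOn g (Ioc 0 b)) (hb0 : 0 < b) (hb : 0 < g b)
    {c : ℝ} (hc : c < 1) : ∀ᶠ z in 𝓝[>] 0, c < g z := by
  have hpos := h.pos hb
  obtain ⟨a, hca, ha1⟩ := exists_between (max_lt hc one_pos)
  have ha0 : 0 < a := (le_max_right c 0).trans_lt hca
  obtain ⟨z₂, hz₂, hgz₂⟩ : ∃ z₂ ∈ Ioc 0 b, a ≤ g z₂ := by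
    by_contra! hlt
    have hc' : 0 < a⁻¹ - 1 := by linarith [one_lt_inv₀ ha0 |>.2 ha1]
    have hrhs : ∀ z ∈ Ioc 0 b, (a⁻¹ - 1) / z ^ 2 ≤ -rhs z (g z) := fun z hz ↦ by
      have := rhs_le hz.1 (hpos z hz) (hlt z hz).le
      rw [← neg_sub, neg_div]
      exact neg_le_neg this
    obtain ⟨z, hz, hgz⟩ := exists_lt_of_div_sq_le_deriv hb0 hc'
      (fun z hz ↦ (h.hasDerivAt hz hz.1.ne').neg) hrhs (-a)
    simp only [Pi.neg_apply, neg_lt_neg_iff] at hgz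
    exact (hlt z hz).not_gt hgz
  filter_upwards [Ioc_mem_nhdsGT hz₂.1] with z hz
  exact (le_max_left c 0).trans_lt hca |>.trans_le <|
    (h.mono (Ioc_subset_Ioc_right hz₂.2)).forall_le_of_le le_rfl ha0 ha1.le hgz₂ z hz

end ReducedODE

theorem stmt_5_general (z₀ g₀ γ : ℝ) (hg₀ : 0 < g₀)
    (g : ℝ → ℝ) (hγ : 0 ≤ γ) (hγz : γ < z₀) (hinit : g z₀ = g₀)
    (hsol : ∀ z ∈ Ioc γ z₀, DifferentiableAt ℝ g z ∧
      (1 - 3 / 4 * z * g z - z ^ 2 * deriv g z) * g z = 1)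
    (hmax : ¬ ∃ γ' : ℝ, ∃ g' : ℝ → ℝ, γ' < γ ∧ g' z₀ = g₀ ∧
      (∀ z ∈ Ioc γ z₀, g' z = g z) ∧
      (∀ z ∈ Ioc γ' z₀, DifferentiableAt ℝ g' z ∧
        (1 - 3 / 4 * z * g' z - z ^ 2 * deriv g' z) * g' z = 1)) :
    γ = 0 ∧ (∀ z ∈ Ioc (0 : ℝ) z₀, 0 < g z) ∧
      Tendsto g (nhdsWithin 0 (Ioi 0)) (nhds 1) := by
  have h : ReducedODE.IsSolOn g (Ioc γ z₀) := hsol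
  have hb : 0 < g z₀ := hinit ▸ hg₀
  obtain rfl : γ = 0 := by
    by_contra hγ0
    obtain ⟨γ', hγ', f, hfg, hf⟩ := h.exists_extension (hγ.lt_of_ne' hγ0) hγz hb
    exact hmax ⟨γ', f, hγ', (hfg (right_mem_Ioc.2 hγz)).trans hinit, hfg, hf⟩
  exact ⟨rfl, h.pos hb, tendsto_order.2
    ⟨fun c hc ↦ h.eventually_gt hγz hb hc, fun c hc ↦ h.eventually_lt hγz hb hc⟩⟩

/-- The left maximal solution `g` of `(1 − (3/4) z g − z² g') g = 1`, `g z₀ = g₀`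
(with `z₀ > 0`, `g₀ > 0`) is defined and positive on `(0, z₀]`, and `g(z) → 1`
as `z → 0⁺`.  Formally: if `g` solves the equation on `(γ, z₀]` with `γ ≥ 0` and
cannot be extended as a solution to any larger interval `(γ', z₀]` with
`γ' < γ`, then `γ = 0`, `g > 0` on `(0, z₀]`, and `g → 1` at `0⁺`. -/
theorem stmt_5 (z₀ g₀ γ : ℝ) (hz₀ : 0 < z₀) (hg₀ : 0 < g₀)
    (g : ℝ → ℝ) (hγ : 0 ≤ γ) (hγz : γ < z₀) (hinit : g z₀ = g₀)
    (hsol : ∀ z ∈ Ioc γ z₀, DifferentiableAt ℝ g z ∧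
      (1 - 3 / 4 * z * g z - z ^ 2 * deriv g z) * g z = 1)
    (hmax : ¬ ∃ γ' : ℝ, ∃ g' : ℝ → ℝ, γ' < γ ∧ g' z₀ = g₀ ∧
      (∀ z ∈ Ioc γ z₀, g' z = g z) ∧
      (∀ z ∈ Ioc γ' z₀, DifferentiableAt ℝ g' z ∧
        (1 - 3 / 4 * z * g' z - z ^ 2 * deriv g' z) * g' z = 1)) :
    γ = 0 ∧ (∀ z ∈ Ioc (0 : ℝ) z₀, 0 < g z) ∧
      Tendsto g (nhdsWithin 0 (Ioi 0)) (nhds 1) :=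
  stmt_5_general z₀ g₀ γ hg₀ g hγ hγz hinit hsol hmax
end

section
/- Let g be the left maximal solution of g'(z) = z⁻²(1 − 1/g(z)) − (3/4)g(z)/z with g(z₀) = g₀ > 0, z₀ > 0, which is positive on (0,z₀] with g(z) → 1 as z → 0⁺. Then g(z)² = 2 z^{−3/2} ∫₀ᶻ s^{−1/2} (g(s) − 1) ds for all z ∈ (0, z₀]. -/
/-!
Along a solution, `(z^{3/2} g²)' = 2 z^{-1/2} (g - 1)`. As `g → 1` at `0⁺`, `z^{3/2} g² → 0` and
the right-hand side is bounded by a multiple of the integrable `z^{-1/2}`, so the fundamental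
theorem of calculus on `(0, z]` gives `z^{3/2} g(z)² = 2 ∫₀ᶻ s^{-1/2} (g(s) - 1) ds`.
-/

open Set Filter MeasureTheory Topology

lemma exists_bound_of_continuousOn_Ioc_of_tendsto {E : Type*} [NormedAddCommGroup E]
    {g : ℝ → E} {a b : ℝ} {l : E} (hg : ContinuousOn g (Ioc a b))
    (hlim : Tendsto g (𝓝[>] a) (𝓝 l)) : ∃ C, ∀ s ∈ Ioc a b, ‖g s‖ ≤ C := by
  classical
  have hext : ContinuousOn (Function.update g a l) (Icc a b) := by
    rw [continuousOn_update_iff, Icc_sdiff_left]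
    exact ⟨hg, fun _ => hlim.mono_left (nhdsWithin_mono _ Ioc_subset_Ioi_self)⟩
  obtain ⟨C, hC⟩ := isCompact_Icc.exists_bound_of_continuousOn hext
  refine ⟨C, fun s hs => ?_⟩
  simpa [Function.update_of_ne hs.1.ne'] using hC s (Ioc_subset_Icc_self hs)

lemma intervalIntegrable_rpow_mul_of_tendsto {g : ℝ → ℝ} {b r l : ℝ} (hb : 0 ≤ b)
    (hr : -1 < r) (hg : ContinuousOn g (Ioc 0 b)) (hlim : Tendsto g (𝓝[>] 0) (𝓝 l)) :
    IntervalIntegrable (fun s => s ^ r * g s) volume 0 b := by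
  obtain ⟨C, hC⟩ := exists_bound_of_continuousOn_Ioc_of_tendsto hg hlim
  have hpow := (intervalIntegrable_iff_integrableOn_Ioc_of_le hb).1
    (intervalIntegral.intervalIntegrable_rpow' (a := 0) (b := b) hr)
  rw [intervalIntegrable_iff_integrableOn_Ioc_of_le hb]
  refine hpow.mul_bdd (c := C) (hg.aestronglyMeasurable measurableSet_Ioc) ?_
  filter_upwards [ae_restrict_mem measurableSet_Ioc] using hC

lemma hasDerivAt_rpow_three_halves_mul_sq {g : ℝ → ℝ} {t : ℝ} (ht : 0 < t) (hgt : g t ≠ 0)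
    (hsol : HasDerivAt g ((t ^ 2)⁻¹ * (1 - (g t)⁻¹) - 3 / 4 * g t / t) t) :
    HasDerivAt (fun s => s ^ ((3 : ℝ) / 2) * g s ^ 2)
      (2 * (t ^ (-(1 : ℝ) / 2) * (g t - 1))) t := by
  refine ((Real.hasDerivAt_rpow_const (p := (3 : ℝ) / 2) (Or.inl ht.ne')).mul
    (hsol.pow 2)).congr_deriv ?_
  have h32 : t ^ ((3 : ℝ) / 2) = t * √t := by
    rw [Real.sqrt_eq_rpow, ← Real.rpow_one_add' ht.le (by norm_num)]; norm_num
  have h12 : t ^ ((3 : ℝ) / 2 - 1) = √t := by rw [Real.sqrt_eq_rpow]; norm_num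
  have hm12 : t ^ (-(1 : ℝ) / 2) = (√t)⁻¹ := by
    rw [Real.sqrt_eq_rpow, ← Real.rpow_neg ht.le]; norm_num
  rw [Pi.pow_apply, h32, h12, hm12]
  field_simp
  rw [Real.sq_sqrt ht.le]
  ring

theorem stmt_6_general (z₀ : ℝ) (g : ℝ → ℝ)
    (hpos : ∀ z ∈ Ioc (0 : ℝ) z₀, 0 < g z)
    (hsol : ∀ z ∈ Ioc (0 : ℝ) z₀,
      HasDerivAt g ((z ^ 2)⁻¹ * (1 - (g z)⁻¹) - 3 / 4 * g z / z) z)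
    (hlim : Tendsto g (nhdsWithin 0 (Ioi 0)) (nhds 1)) :
    ∀ z ∈ Ioc (0 : ℝ) z₀,
      (g z) ^ 2 = 2 * z ^ (-(3 : ℝ) / 2) *
        ∫ s in (0 : ℝ)..z, s ^ (-(1 : ℝ) / 2) * (g s - 1) := by
  intro z ⟨hz, hzz₀⟩
  have hsub : Ioc 0 z ⊆ Ioc 0 z₀ := Ioc_subset_Ioc_right hzz₀
  have hderiv : ∀ t ∈ Ioc 0 z, HasDerivAt (fun s => s ^ ((3 : ℝ) / 2) * g s ^ 2)
      (2 * (t ^ (-(1 : ℝ) / 2) * (g t - 1))) t := fun t ht =>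
    hasDerivAt_rpow_three_halves_mul_sq ht.1 (hpos t (hsub ht)).ne' (hsol t (hsub ht))
  have hcont : ContinuousOn (fun s => g s - 1) (Ioc 0 z) :=
    fun t ht => (hsol t (hsub ht)).continuousAt.continuousWithinAt.sub continuousWithinAt_const
  have hint : IntervalIntegrable (fun s => s ^ (-(1 : ℝ) / 2) * (g s - 1)) volume 0 z :=
    intervalIntegrable_rpow_mul_of_tendsto hz.le (by norm_num) hcont
      (by simpa using hlim.sub_const 1)
  have hlim_zero : Tendsto (fun s => s ^ ((3 : ℝ) / 2) * g s ^ 2) (𝓝[>] 0) (𝓝 0) := by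
    have hpow : Tendsto (fun s : ℝ => s ^ ((3 : ℝ) / 2)) (𝓝[>] 0) (𝓝 0) :=
      ((Real.continuous_rpow_const (by norm_num)).tendsto' 0 0 (by norm_num)).mono_left
        nhdsWithin_le_nhds
    simpa using hpow.mul (hlim.pow 2)
  have hFTC := intervalIntegral.integral_eq_sub_of_hasDerivAt_of_tendsto hz
    (fun t ht => hderiv t (Ioo_subset_Ioc_self ht)) (hint.const_mul 2) hlim_zero
    ((hderiv z (right_mem_Ioc.2 hz)).continuousAt.tendsto.mono_left nhdsWithin_le_nhds)
  rw [intervalIntegral.integral_const_mul, sub_zero] at hFTC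
  rw [mul_right_comm, hFTC, mul_right_comm, ← Real.rpow_add hz]
  norm_num

/-- If `g` solves `g' = z⁻²(1 − 1/g) − (3/4) g/z` on `(0, z₀]` with `g z₀ = g₀ > 0`,
positive on `(0, z₀]` and `g → 1` at `0⁺`, then
`g(z)² = 2 z^{−3/2} ∫₀ᶻ s^{−1/2}(g(s) − 1) ds` for all `z ∈ (0, z₀]`. -/
theorem stmt_6 (z₀ g₀ : ℝ) (hz₀ : 0 < z₀) (hg₀ : 0 < g₀)
    (g : ℝ → ℝ) (hinit : g z₀ = g₀)
    (hpos : ∀ z ∈ Ioc (0 : ℝ) z₀, 0 < g z)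
    (hsol : ∀ z ∈ Ioc (0 : ℝ) z₀,
      HasDerivAt g ((z ^ 2)⁻¹ * (1 - (g z)⁻¹) - 3 / 4 * g z / z) z)
    (hlim : Tendsto g (nhdsWithin 0 (Ioi 0)) (nhds 1)) :
    ∀ z ∈ Ioc (0 : ℝ) z₀,
      (g z) ^ 2 = 2 * z ^ (-(3 : ℝ) / 2) *
        ∫ s in (0 : ℝ)..z, s ^ (-(1 : ℝ) / 2) * (g s - 1) :=
  stmt_6_general z₀ g hpos hsol hlim
end

section
/- For every β ≥ 0, e^{−1/z} ∫_z¹ s^{β−2} e^{1/s} ds = O(z^β) as z → 0⁺. -/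
/-!
With `F s = s ^ β * e^{1/s}` one has `-F' s = s^{β-2} e^{1/s} (1 - β s)`, so close to `0`, where
`β s ≤ 1/2`, the integrand is at most `-2 F'`. Hence `∫_z^a s^{β-2} e^{1/s} ds ≤ 2 F z`, while the
remaining piece `∫_a^1` is a constant, eventually dominated by `F z → ∞`. Multiplying
`∫_z^1 ≤ 3 F z` by `e^{-1/z}` gives `3 z ^ β`.
-/

open Set Filter Topology Real

theorem continuousOn_rpow_mul_exp_one_div (γ : ℝ) :
    ContinuousOn (fun s : ℝ => s ^ γ * exp (1 / s)) (Ioi 0) := by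
  intro s hs
  have hs : s ≠ 0 := (mem_Ioi.1 hs).ne'
  exact ((continuousAt_rpow_const s γ (Or.inl hs)).mul
    (continuous_exp.continuousAt.comp (continuousAt_const.div continuousAt_id hs))).continuousWithinAt

theorem intervalIntegrable_rpow_mul_exp_one_div (γ : ℝ) {c d : ℝ} (hc : 0 < c) (hd : 0 < d) :
    IntervalIntegrable (fun s : ℝ => s ^ γ * exp (1 / s)) MeasureTheory.volume c d :=
  ((continuousOn_rpow_mul_exp_one_div γ).mono fun _ hx => lt_of_lt_of_le (lt_min hc hd) hx.1)
    |>.intervalIntegrable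

theorem hasDerivAt_rpow_mul_exp_one_div (β : ℝ) {s : ℝ} (hs : 0 < s) :
    HasDerivAt (fun t : ℝ => t ^ β * exp (1 / t))
      (s ^ (β - 2) * exp (1 / s) * (β * s - 1)) s := by
  have hpow : HasDerivAt (fun t : ℝ => t ^ β) (β * s ^ (β - 1)) s :=
    hasDerivAt_rpow_const (Or.inl hs.ne')
  have hinv : HasDerivAt (fun t : ℝ => 1 / t) (-(s ^ 2)⁻¹) s := by
    simpa only [one_div] using hasDerivAt_inv hs.ne'
  refine (hpow.mul ((hasDerivAt_exp (1 / s)).comp s hinv)).congr_deriv ?_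
  have h1 : s ^ (β - 1) = s ^ (β - 2) * s := by
    rw [show β - 1 = β - 2 + 1 by ring, rpow_add_one hs.ne']
  have h2 : s ^ β = s ^ (β - 2) * s ^ 2 := by
    rw [← rpow_two, ← rpow_add hs, sub_add_cancel]
  rw [Function.comp_apply, h1, h2]
  field_simp
  ring

theorem integral_rpow_sub_two_mul_exp_one_div_le {β z a : ℝ} (hz : 0 < z) (hza : z ≤ a)
    (ha : |β| * a ≤ 1 / 2) :
    ∫ s in z..a, s ^ (β - 2) * exp (1 / s) ≤ 2 * (z ^ β * exp (1 / z)) := by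
  have ha0 : 0 < a := hz.trans_le hza
  have hcont : ContinuousOn (fun s : ℝ => s ^ (β - 2) * exp (1 / s)) (uIcc z a) :=
    (continuousOn_rpow_mul_exp_one_div _).mono fun _ hx =>
      lt_of_lt_of_le (lt_min hz ha0) hx.1
  have hderiv_int : IntervalIntegrable
      (fun s : ℝ => s ^ (β - 2) * exp (1 / s) * (β * s - 1)) MeasureTheory.volume z a :=
    (hcont.mul (by fun_prop)).intervalIntegrable
  have hpointwise : ∀ s ∈ Icc z a,
      s ^ (β - 2) * exp (1 / s) ≤ -2 * (s ^ (β - 2) * exp (1 / s) * (β * s - 1)) := by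
    intro s hs
    have hs0 : 0 < s := hz.trans_le hs.1
    have hβs : β * s ≤ 1 / 2 :=
      calc β * s ≤ |β| * s := mul_le_mul_of_nonneg_right (le_abs_self β) hs0.le
        _ ≤ |β| * a := mul_le_mul_of_nonneg_left hs.2 (abs_nonneg β)
        _ ≤ 1 / 2 := ha
    have : 0 ≤ s ^ (β - 2) * exp (1 / s) := by positivity
    nlinarith
  have hFa : 0 ≤ a ^ β * exp (1 / a) := by positivity
  calc ∫ s in z..a, s ^ (β - 2) * exp (1 / s)
      ≤ ∫ s in z..a, -2 * (s ^ (β - 2) * exp (1 / s) * (β * s - 1)) :=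
        intervalIntegral.integral_mono_on hza hcont.intervalIntegrable
          (hderiv_int.const_mul _) hpointwise
    _ = -2 * (a ^ β * exp (1 / a) - z ^ β * exp (1 / z)) := by
        rw [intervalIntegral.integral_const_mul,
          intervalIntegral.integral_eq_sub_of_hasDerivAt (fun s hs =>
            hasDerivAt_rpow_mul_exp_one_div β (hz.trans_le (uIcc_of_le hza ▸ hs).1)) hderiv_int]
    _ ≤ 2 * (z ^ β * exp (1 / z)) := by linarith

theorem tendsto_rpow_mul_exp_one_div_nhdsGT_zero (β : ℝ) :
    Tendsto (fun z : ℝ => z ^ β * exp (1 / z)) (𝓝[>] 0) atTop := by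
  refine ((tendsto_exp_div_rpow_atTop β).comp tendsto_inv_nhdsGT_zero).congr' ?_
  filter_upwards [self_mem_nhdsWithin] with z hz
  rw [Function.comp_apply, inv_rpow (le_of_lt hz), div_inv_eq_mul, mul_comm, one_div]

theorem eventually_integral_rpow_sub_two_mul_exp_one_div_le (β : ℝ) :
    ∀ᶠ z in 𝓝[>] 0, ∫ s in z..1, s ^ (β - 2) * exp (1 / s) ≤ 3 * (z ^ β * exp (1 / z)) := by
  set a : ℝ := 1 / (2 * |β| + 1)
  have ha0 : 0 < a := by positivity
  have ha1 : a ≤ 1 := div_le_one_of_le₀ (by linarith [abs_nonneg β]) (by positivity)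
  have haβ : |β| * a ≤ 1 / 2 := by
    rw [mul_one_div, div_le_div_iff₀ (by positivity) two_pos]
    linarith
  filter_upwards [self_mem_nhdsWithin, Ioc_mem_nhdsGT ha0,
    (tendsto_rpow_mul_exp_one_div_nhdsGT_zero β).eventually_ge_atTop
      (∫ s in a..1, s ^ (β - 2) * exp (1 / s))] with z hz hza hlarge
  rw [← intervalIntegral.integral_add_adjacent_intervals
    (intervalIntegrable_rpow_mul_exp_one_div _ hz ha0)
    (intervalIntegrable_rpow_mul_exp_one_div _ ha0 one_pos)]
  linarith [integral_rpow_sub_two_mul_exp_one_div_le hz hza.2 haβ]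

theorem stmt_7_general (β : ℝ) :
    (fun z : ℝ => Real.exp (-(1 / z)) * ∫ s in z..1, s ^ (β - 2) * Real.exp (1 / s))
      =O[nhdsWithin 0 (Ioi 0)] (fun z : ℝ => z ^ β) := by
  refine Asymptotics.IsBigO.of_bound 3 ?_
  filter_upwards [self_mem_nhdsWithin, Ioo_mem_nhdsGT one_pos,
    eventually_integral_rpow_sub_two_mul_exp_one_div_le β] with z hz hz1 hle
  have hint : 0 ≤ ∫ s in z..1, s ^ (β - 2) * exp (1 / s) :=
    intervalIntegral.integral_nonneg hz1.2.le fun s hs => by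
      have : 0 < s := hz.trans_le hs.1
      positivity
  rw [Real.norm_of_nonneg (by positivity), Real.norm_of_nonneg (rpow_nonneg (le_of_lt hz) β)]
  calc exp (-(1 / z)) * ∫ s in z..1, s ^ (β - 2) * exp (1 / s)
      ≤ exp (-(1 / z)) * (3 * (z ^ β * exp (1 / z))) := by gcongr
    _ = 3 * z ^ β := by rw [mul_left_comm, mul_left_comm _ (z ^ β), ← exp_add]; simp

/-- For every `β ≥ 0`, `e^{−1/z} ∫_z¹ s^{β−2} e^{1/s} ds = O(z^β)` as `z → 0⁺`. -/
theorem stmt_7 (β : ℝ) (hβ : 0 ≤ β) :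
    (fun z : ℝ => Real.exp (-(1 / z)) * ∫ s in z..1, s ^ (β - 2) * Real.exp (1 / s))
      =O[nhdsWithin 0 (Ioi 0)] (fun z : ℝ => z ^ β) :=
  stmt_7_general β
end

section
/- Let δ > 0 and ν ∈ ℝ. Then for every n ∈ ℕ, z^{−ν} e^{−1/z} ∫_z^δ s^{ν−2} e^{1/s} ds = Σ_{j=0}^{n−1} (ν)_j z^j + O(z^n) as z → 0⁺, where (ν)_j = ν(ν+1)⋯(ν+j−1) is the rising Pochhammer symbol with (ν)₀ = 1. -/
/-!
Integration by parts, with `d/ds (s^α e^{1/s}) = (α s^{α-1} - s^{α-2}) e^{1/s}`,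
turns `∫_z^δ s^{α-2} e^{1/s} ds` into
`z^α e^{1/z} - δ^α e^{1/δ} + α ∫_z^δ s^{α-1} e^{1/s} ds`.
Applying this `n` times from `α = ν` and multiplying by `z^{-ν} e^{-1/z}` leaves
`Σ_{j<n} (ν)_j z^j`, a constant times the exponentially small `z^{-ν} e^{-1/z}`, and
`(ν)_n z^{-ν} e^{-1/z} ∫_z^δ s^{ν+n-2} e^{1/s} ds`. The last term is `O(z^n)`: on an
interval `[z, z₀]` where `β s ≤ 1/2`, the same integration by parts bounds
`∫_z^{z₀} s^{β-2} e^{1/s} ds` by its boundary term `z^β e^{1/z}` plus half of itself.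
-/

open Set Filter Finset Topology Asymptotics

lemma intervalIntegrable_rpow_mul_exp_inv (α : ℝ) {a b : ℝ} (ha : 0 < a) (hb : 0 < b) :
    IntervalIntegrable (fun s : ℝ => s ^ α * Real.exp (1 / s)) MeasureTheory.volume a b := by
  refine ContinuousOn.intervalIntegrable fun s hs => ?_
  have hs0 : s ≠ 0 := (lt_of_lt_of_le (lt_min ha hb) hs.1).ne'
  exact ((Real.continuousAt_rpow_const s α (Or.inl hs0)).mul
    (Real.continuous_exp.continuousAt.comp
      (continuousAt_const.div continuousAt_id hs0))).continuousWithinAt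

lemma hasDerivAt_rpow_mul_exp_inv (α : ℝ) {s : ℝ} (hs : 0 < s) :
    HasDerivAt (fun t : ℝ => t ^ α * Real.exp (1 / t))
      ((α * s ^ (α - 1) - s ^ (α - 2)) * Real.exp (1 / s)) s := by
  have hinv : HasDerivAt (fun t : ℝ => 1 / t) (-(s ^ 2)⁻¹) s := by
    simpa only [one_div] using hasDerivAt_inv hs.ne'
  refine ((Real.hasDerivAt_rpow_const (p := α) (Or.inl hs.ne')).mul hinv.exp).congr_deriv ?_
  rw [Real.rpow_sub hs α 2, Real.rpow_two]
  field_simp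
  ring

lemma integral_rpow_sub_two_mul_exp_inv (α : ℝ) {a b : ℝ} (ha : 0 < a) (hb : 0 < b) :
    ∫ s in a..b, s ^ (α - 2) * Real.exp (1 / s) =
      a ^ α * Real.exp (1 / a) - b ^ α * Real.exp (1 / b) +
        α * ∫ s in a..b, s ^ (α - 1) * Real.exp (1 / s) := by
  have hint₁ := (intervalIntegrable_rpow_mul_exp_inv (α - 1) ha hb).const_mul α
  have hint₂ := intervalIntegrable_rpow_mul_exp_inv (α - 2) ha hb
  have hFTC := intervalIntegral.integral_eq_sub_of_hasDerivAt
    (fun s hs => hasDerivAt_rpow_mul_exp_inv α (lt_of_lt_of_le (lt_min ha hb) hs.1))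
    ((hint₁.sub hint₂).congr fun s _ => by ring)
  rw [show (fun s : ℝ => (α * s ^ (α - 1) - s ^ (α - 2)) * Real.exp (1 / s)) =
      fun s => α * (s ^ (α - 1) * Real.exp (1 / s)) - s ^ (α - 2) * Real.exp (1 / s) by
    funext s; ring, intervalIntegral.integral_sub hint₁ hint₂,
    intervalIntegral.integral_const_mul] at hFTC
  linarith

lemma integral_rpow_sub_two_mul_exp_inv_eq_sum (ν : ℝ) {a b : ℝ} (ha : 0 < a) (hb : 0 < b)
    (n : ℕ) :
    ∫ s in a..b, s ^ (ν - 2) * Real.exp (1 / s) =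
      ∑ j ∈ range n, (∏ i ∈ range j, (ν + i)) *
          (a ^ (ν + j) * Real.exp (1 / a) - b ^ (ν + j) * Real.exp (1 / b)) +
        (∏ i ∈ range n, (ν + i)) * ∫ s in a..b, s ^ (ν + n - 2) * Real.exp (1 / s) := by
  induction n with
  | zero => simp
  | succ n ih =>
    rw [ih, sum_range_succ, prod_range_succ, integral_rpow_sub_two_mul_exp_inv (ν + n) ha hb,
      show ν + ((n + 1 : ℕ) : ℝ) - 2 = ν + n - 1 by push_cast; ring]
    ring

lemma integral_rpow_sub_two_mul_exp_inv_le {β a b : ℝ} (ha : 0 < a) (hab : a ≤ b)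
    (hβb : β * b ≤ 1 / 2) :
    ∫ s in a..b, s ^ (β - 2) * Real.exp (1 / s) ≤ 2 * (a ^ β * Real.exp (1 / a)) := by
  have hb : 0 < b := ha.trans_le hab
  have hhalf : β * ∫ s in a..b, s ^ (β - 1) * Real.exp (1 / s) ≤
      1 / 2 * ∫ s in a..b, s ^ (β - 2) * Real.exp (1 / s) := by
    rw [← intervalIntegral.integral_const_mul, ← intervalIntegral.integral_const_mul]
    refine intervalIntegral.integral_mono_on hab
      ((intervalIntegrable_rpow_mul_exp_inv _ ha hb).const_mul _)
      ((intervalIntegrable_rpow_mul_exp_inv _ ha hb).const_mul _) fun s hs => ?_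
    have hs0 : 0 < s := ha.trans_le hs.1
    have hβs : β * s ≤ 1 / 2 := by rcases le_total 0 β with h | h <;> nlinarith [hs.1, hs.2]
    rw [show β - 1 = β - 2 + 1 by ring, Real.rpow_add_one hs0.ne']
    have : 0 ≤ s ^ (β - 2) * Real.exp (1 / s) := by positivity
    nlinarith
  have : 0 ≤ b ^ β * Real.exp (1 / b) := by positivity
  linarith [integral_rpow_sub_two_mul_exp_inv β ha hb]

lemma tendsto_rpow_mul_exp_inv_nhdsGT_zero (β : ℝ) :
    Tendsto (fun z : ℝ => z ^ β * Real.exp (1 / z)) (𝓝[>] 0) atTop := by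
  refine ((tendsto_exp_div_rpow_atTop β).comp tendsto_inv_nhdsGT_zero).congr' ?_
  filter_upwards [self_mem_nhdsWithin] with z (hz : 0 < z)
  rw [Function.comp_apply, Real.inv_rpow hz.le, div_inv_eq_mul, one_div, mul_comm]

lemma rpow_neg_mul_exp_neg_inv_mul_rpow_add_mul_exp_inv {z : ℝ} (hz : 0 < z) (ν β : ℝ) :
    z ^ (-ν) * Real.exp (-(1 / z)) * (z ^ (ν + β) * Real.exp (1 / z)) = z ^ β := by
  rw [mul_mul_mul_comm, ← Real.rpow_add hz, ← Real.exp_add, neg_add_cancel_left, neg_add_cancel,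
    Real.exp_zero, mul_one]

lemma isBigO_rpow_neg_mul_exp_neg_inv (ν : ℝ) (n : ℕ) :
    (fun z : ℝ => z ^ (-ν) * Real.exp (-(1 / z))) =O[𝓝[>] 0] fun z => z ^ n := by
  refine IsBigO.of_bound 1 ?_
  filter_upwards [self_mem_nhdsWithin,
    (tendsto_rpow_mul_exp_inv_nhdsGT_zero (ν + n)).eventually_ge_atTop 1] with z (hz : 0 < z) hge
  have hcancel := rpow_neg_mul_exp_neg_inv_mul_rpow_add_mul_exp_inv hz ν n
  rw [Real.rpow_natCast] at hcancel
  have : 0 ≤ z ^ (-ν) * Real.exp (-(1 / z)) := by positivity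
  rw [Real.norm_of_nonneg this, Real.norm_of_nonneg (by positivity), one_mul, ← hcancel]
  exact le_mul_of_one_le_right this hge

lemma isBigO_integral_rpow_sub_two_mul_exp_inv (β : ℝ) {δ : ℝ} (hδ : 0 < δ) :
    (fun z : ℝ => ∫ s in z..δ, s ^ (β - 2) * Real.exp (1 / s)) =O[𝓝[>] 0]
      fun z => z ^ β * Real.exp (1 / z) := by
  have hsmall : ∀ᶠ z in 𝓝[>] (0 : ℝ), β * z < 1 / 2 := by
    have : Tendsto (fun z : ℝ => β * z) (𝓝[>] 0) (𝓝 0) := by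
      simpa using ((continuous_const_mul β).tendsto 0).mono_left nhdsWithin_le_nhds
    exact this.eventually_lt_const (by norm_num)
  obtain ⟨z₀, ⟨hz₀, hz₀δ⟩, hβz₀⟩ :=
    (Eventually.and (Ioo_mem_nhdsGT hδ) hsmall).exists
  set K := ∫ s in z₀..δ, s ^ (β - 2) * Real.exp (1 / s)
  have hnear : (fun z : ℝ => ∫ s in z..z₀, s ^ (β - 2) * Real.exp (1 / s)) =O[𝓝[>] 0]
      fun z => z ^ β * Real.exp (1 / z) := by
    refine IsBigO.of_bound 2 ?_
    filter_upwards [Ioo_mem_nhdsGT hz₀] with z ⟨hz, hzz₀⟩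
    rw [Real.norm_of_nonneg (intervalIntegral.integral_nonneg hzz₀.le fun s hs =>
        have : 0 < s := hz.trans_le hs.1; by positivity),
      Real.norm_of_nonneg (by positivity)]
    exact integral_rpow_sub_two_mul_exp_inv_le hz hzz₀.le hβz₀.le
  have hconst : (fun _ : ℝ => K) =O[𝓝[>] 0] fun z => z ^ β * Real.exp (1 / z) :=
    (isLittleO_const_left.2 <| Or.inr <|
      tendsto_norm_atTop_atTop.comp (tendsto_rpow_mul_exp_inv_nhdsGT_zero β)).isBigO
  refine (hnear.add hconst).congr' ?_ EventuallyEq.rfl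
  filter_upwards [Ioo_mem_nhdsGT hz₀] with z ⟨hz, hzz₀⟩
  exact intervalIntegral.integral_add_adjacent_intervals
    (intervalIntegrable_rpow_mul_exp_inv _ hz hz₀)
    (intervalIntegrable_rpow_mul_exp_inv _ hz₀ hδ)

/-- For `δ > 0`, `ν ∈ ℝ` and every `n ∈ ℕ`,
`z^{−ν} e^{−1/z} ∫_z^δ s^{ν−2} e^{1/s} ds = Σ_{j<n} (ν)_j z^j + O(z^n)` as `z → 0⁺`,
where `(ν)_j = ν(ν+1)⋯(ν+j−1)` is the rising factorial. -/
theorem stmt_8 (δ ν : ℝ) (hδ : 0 < δ) (n : ℕ) :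
    (fun z : ℝ =>
        z ^ (-ν) * Real.exp (-(1 / z)) *
            (∫ s in z..δ, s ^ (ν - 2) * Real.exp (1 / s)) -
          ∑ j ∈ range n, (∏ i ∈ range j, (ν + i)) * z ^ j)
      =O[nhdsWithin 0 (Ioi 0)] (fun z : ℝ => z ^ n) := by
  set P : ℕ → ℝ := fun j => ∏ i ∈ range j, (ν + i)
  set C := ∑ j ∈ range n, P j * (δ ^ (ν + j) * Real.exp (1 / δ))
  have hremainder : (fun z : ℝ => z ^ (-ν) * Real.exp (-(1 / z)) *
      ∫ s in z..δ, s ^ (ν + n - 2) * Real.exp (1 / s)) =O[𝓝[>] 0] fun z => z ^ n := by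
    refine ((isBigO_refl _ _).mul
      (isBigO_integral_rpow_sub_two_mul_exp_inv (ν + n) hδ)).trans_eventuallyEq ?_
    filter_upwards [self_mem_nhdsWithin] with z (hz : 0 < z)
    rw [rpow_neg_mul_exp_neg_inv_mul_rpow_add_mul_exp_inv hz, Real.rpow_natCast]
  refine ((hremainder.const_mul_left (P n)).sub
    ((isBigO_rpow_neg_mul_exp_neg_inv ν n).const_mul_left C)).congr' ?_ EventuallyEq.rfl
  filter_upwards [self_mem_nhdsWithin] with z (hz : 0 < z)
  have hterm (j : ℕ) : z ^ (-ν) * Real.exp (-(1 / z)) *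
      (P j * (z ^ (ν + j) * Real.exp (1 / z) - δ ^ (ν + j) * Real.exp (1 / δ))) =
        P j * z ^ j -
          P j * (δ ^ (ν + j) * Real.exp (1 / δ)) * (z ^ (-ν) * Real.exp (-(1 / z))) := by
    rw [mul_left_comm, mul_sub, rpow_neg_mul_exp_neg_inv_mul_rpow_add_mul_exp_inv hz,
      Real.rpow_natCast]
    ring
  rw [integral_rpow_sub_two_mul_exp_inv_eq_sum ν hz hδ n, mul_add, mul_sum,
    sum_congr rfl fun j _ => hterm j, sum_sub_distrib, ← sum_mul]
  ring
end

section
/- The formal power series g̃(z) = Σ_{k≥0} α_k z^k with α₀ = 1 and α_{k+1} = (k/2 + 3/4) Σ_{j=0}^k α_j α_{k−j} is the unique formal power series solution of (1 − (3/4)z·g − z²·g')·g = 1 in ℝ[[z]]. -/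
/-!
Since `2 f f' = (f²)'` and `X · d/dX` multiplies the `n`-th coefficient by `n`, the `(k+1)`-st
coefficient of `(1 - (3/4) X f - X² f') f` is `f_{k+1} - (k/2 + 3/4) [X^k] f²`. So the equation
holds exactly when `f₀ = 1` and the coefficients obey the recursion defining `α`, and a recursion
expressing `f_{k+1}` through the coefficients of `f²` up to degree `k` has only one solution.
-/

open Finset PowerSeries

namespace PowerSeries

section CommSemiring

variable {R : Type*} [CommSemiring R]

theorem coeff_X_mul_derivative (g : R⟦X⟧) (n : ℕ) :
    coeff n (X * d⁄dX R g) = n * coeff n g := by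
  cases n with
  | zero => simp
  | succ m => rw [coeff_succ_X_mul, coeff_derivative, mul_comm, Nat.cast_succ]

theorem coeff_sq_congr {f g : R⟦X⟧} {k : ℕ} (h : ∀ j ≤ k, coeff j f = coeff j g) :
    coeff k (f ^ 2) = coeff k (g ^ 2) := by
  simp only [sq, coeff_mul]
  refine sum_congr rfl fun p hp => ?_
  have hpk : p.1 + p.2 = k := mem_antidiagonal.mp hp
  rw [h p.1 (by omega), h p.2 (by omega)]

theorem eq_of_coeff_succ_eq_mul_coeff_sq {c : ℕ → R} {f g : R⟦X⟧}
    (h0 : coeff 0 f = coeff 0 g)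
    (hf : ∀ k, coeff (k + 1) f = c k * coeff k (f ^ 2))
    (hg : ∀ k, coeff (k + 1) g = c k * coeff k (g ^ 2)) : f = g := by
  ext n
  induction n using Nat.strong_induction_on with
  | _ n ih =>
    cases n with
    | zero => exact h0
    | succ k =>
      rw [hf, hg, coeff_sq_congr fun j hj => ih j (by omega)]

theorem coeff_sq_eq_sum_range (a : ℕ → R) (k : ℕ) :
    coeff k (mk a ^ 2) = ∑ j ∈ range (k + 1), a j * a (k - j) := by
  simp only [sq, coeff_mul, Nat.sum_antidiagonal_eq_sum_range_succ_mk, coeff_mk]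

end CommSemiring

section Field

variable {K : Type*} [Field K]

noncomputable def odeLHS (f : K⟦X⟧) : K⟦X⟧ :=
  (1 - C (3 / 4 : K) * X * f - X ^ 2 * d⁄dX K f) * f

theorem coeff_zero_odeLHS (f : K⟦X⟧) :
    coeff 0 (odeLHS f) = coeff 0 f := by
  simp [odeLHS]

variable [NeZero (2 : K)]

theorem coeff_X_mul_derivative_mul_self (f : K⟦X⟧) (n : ℕ) :
    coeff n (X * d⁄dX K f * f) = (n : K) / 2 * coeff n (f ^ 2) := by
  have h : X * d⁄dX K (f ^ 2) = C (2 : K) * (X * d⁄dX K f * f) := by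
    rw [derivative_pow, map_ofNat]
    ring
  have hn := congrArg (coeff n) h
  rw [coeff_X_mul_derivative, coeff_C_mul] at hn
  rw [div_mul_eq_mul_div, hn, mul_div_cancel_left₀ _ two_ne_zero]

theorem coeff_succ_odeLHS (f : K⟦X⟧) (k : ℕ) :
    coeff (k + 1) (odeLHS f) =
      coeff (k + 1) f - ((k : K) / 2 + 3 / 4) * coeff k (f ^ 2) := by
  have h : odeLHS f = f - X * (C (3 / 4 : K) * f ^ 2 + X * d⁄dX K f * f) := by
    rw [odeLHS]
    ring
  rw [h, map_sub, coeff_succ_X_mul, map_add, coeff_C_mul, coeff_X_mul_derivative_mul_self]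
  ring

theorem odeLHS_eq_one_iff (f : K⟦X⟧) :
    odeLHS f = 1 ↔
      coeff 0 f = 1 ∧ ∀ k : ℕ, coeff (k + 1) f = ((k : K) / 2 + 3 / 4) * coeff k (f ^ 2) := by
  rw [PowerSeries.ext_iff]
  refine ⟨fun h => ⟨?_, fun k => ?_⟩, fun ⟨h0, hrec⟩ n => ?_⟩
  · simpa [coeff_zero_odeLHS] using h 0
  · have hk := h (k + 1)
    rw [coeff_succ_odeLHS, coeff_one, if_neg k.succ_ne_zero] at hk
    linear_combination hk
  · cases n with
    | zero => rw [coeff_zero_odeLHS, h0, coeff_zero_one]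
    | succ k => rw [coeff_succ_odeLHS, hrec, coeff_one, if_neg k.succ_ne_zero, sub_self]

end Field

end PowerSeries

/-- The formal power series `g̃ = Σ α_k z^k` with `α₀ = 1` and
`α_{k+1} = (k/2 + 3/4) Σ_{j≤k} α_j α_{k−j}` is the unique formal power series
solution of `(1 − (3/4) z g − z² g') g = 1` in `ℝ⟦X⟧`. -/
theorem stmt_10 (α : ℕ → ℝ) (hα0 : α 0 = 1)
    (hαrec : ∀ k : ℕ, α (k + 1) =
      ((k : ℝ) / 2 + 3 / 4) * ∑ j ∈ range (k + 1), α j * α (k - j)) :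
    (1 - PowerSeries.C (3 / 4 : ℝ) * PowerSeries.X * PowerSeries.mk α
        - PowerSeries.X ^ 2 * d⁄dX ℝ (PowerSeries.mk α)) * PowerSeries.mk α = 1 ∧
    ∀ f : ℝ⟦X⟧,
      (1 - PowerSeries.C (3 / 4 : ℝ) * PowerSeries.X * f
          - PowerSeries.X ^ 2 * d⁄dX ℝ f) * f = 1 →
      f = PowerSeries.mk α := by
  have hα : coeff 0 (PowerSeries.mk α) = 1 ∧ ∀ k : ℕ, coeff (k + 1) (PowerSeries.mk α) =
      ((k : ℝ) / 2 + 3 / 4) * coeff k (PowerSeries.mk α ^ 2) :=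
    ⟨by rw [coeff_mk, hα0], fun k => by rw [coeff_mk, coeff_sq_eq_sum_range, hαrec]⟩
  refine ⟨(odeLHS_eq_one_iff _).2 hα, fun f hf => ?_⟩
  obtain ⟨hf0, hfrec⟩ := (odeLHS_eq_one_iff f).1 hf
  exact eq_of_coeff_succ_eq_mul_coeff_sq (hf0.trans hα.1.symm) hfrec hα.2
end

section
/- Let g be the left maximal solution of g'(z) = z⁻²(1 − 1/g(z)) − (3/4)g(z)/z with g(z₀) = g₀ > 0 (z₀ > 0), defined and positive on (0, z₀] with g → 1 at 0. Then for every n ∈ ℕ, g(z) = Σ_{k=0}^n α_k z^k + o(z^n) as z → 0⁺, where α₀ = 1 and α_{k+1} = (k/2 + 3/4) Σ_{j=0}^k α_j α_{k−j}. -/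
/-!
Let `P` be the `n`-th partial sum of `∑ αₖ zᵏ`. The recursion for `α` says exactly that the
defect `P - 1 - (3/4) z P² - z² P P'` vanishes to order `n + 1` at `0`. Subtracting the equation
for `P` from the one for `g` shows that `e = g - P` solves a linear equation `e' = a e + r` with
`a = 1/(z² g P) - 3/(4z) ≥ 1/(4z²)` (as `g P → 1`) and `r = O(z^(n+1)/z²)`. Such a strongly
positive coefficient makes the curves `± M z^(n+1)` barriers: a solution lying outside them at
some point stays outside to the right, which is impossible for `M` large compared with `e` at a
fixed point. Hence `e = O(z^(n+1)) = o(zⁿ)`.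
-/

open Set Filter Finset Asymptotics Polynomial Topology

section PartialSum

variable {R : Type*} [Semiring R] (α : ℕ → R) (n : ℕ)

noncomputable def partialSum : R[X] := ∑ i ∈ range (n + 1), C (α i) * X ^ i

theorem coeff_partialSum (k : ℕ) :
    (partialSum α n).coeff k = if k ≤ n then α k else 0 := by
  simp [partialSum, coeff_C_mul, coeff_X_pow]

theorem coeff_partialSum_of_le {k : ℕ} (hk : k ≤ n) : (partialSum α n).coeff k = α k := by
  rw [coeff_partialSum, if_pos hk]

theorem eval_partialSum (z : R) :
    (partialSum α n).eval z = ∑ k ∈ range (n + 1), α k * z ^ k := by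
  simp [partialSum, eval_finsetSum]

end PartialSum

theorem coeff_X_mul_derivative {R : Type*} [CommSemiring R] (p : R[X]) (k : ℕ) :
    (X * derivative p).coeff k = k * p.coeff k := by
  cases k with
  | zero => simp
  | succ k => rw [coeff_X_mul, coeff_derivative, mul_comm]; push_cast; rfl

theorem two_mul_sum_antidiagonal_snd_mul {R : Type*} [CommSemiring R] (a : ℕ → R) (m : ℕ) :
    2 * ∑ ij ∈ antidiagonal m, (ij.2 : R) * (a ij.1 * a ij.2) =
      m * ∑ ij ∈ antidiagonal m, a ij.1 * a ij.2 := by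
  conv_lhs => rw [two_mul]; enter [1]; rw [← Nat.sum_antidiagonal_swap]
  rw [← sum_add_distrib, mul_sum]
  refine sum_congr rfl fun ij hij => ?_
  rw [← (mem_antidiagonal.mp hij)]
  simp only [Prod.fst_swap, Prod.snd_swap]
  push_cast
  ring

theorem X_pow_dvd_partialSum_defect {K : Type*} [Field K] [CharZero K] {α : ℕ → K}
    (hα0 : α 0 = 1)
    (hαrec : ∀ k : ℕ,
      α (k + 1) = ((k : K) / 2 + 3 / 4) * ∑ j ∈ range (k + 1), α j * α (k - j))
    (n : ℕ) :
    X ^ (n + 1) ∣ partialSum α n - 1 - C (3 / 4 : K) * X * partialSum α n ^ 2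
      - X ^ 2 * (partialSum α n * derivative (partialSum α n)) := by
  set P := partialSum α n
  have hcoeff : ∀ m ≤ n, ∀ ij ∈ antidiagonal m,
      P.coeff ij.1 = α ij.1 ∧ P.coeff ij.2 = α ij.2 :=
    fun m hm ij hij => by
      have := mem_antidiagonal.mp hij
      exact ⟨coeff_partialSum_of_le α n (by omega), coeff_partialSum_of_le α n (by omega)⟩
  rw [X_pow_dvd_iff]
  intro k hk
  rw [show X ^ 2 * (P * derivative P) = X * (P * (X * derivative P)) by ring]
  cases k with
  | zero => simp [P, coeff_partialSum, hα0]
  | succ m =>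
    have hm : m ≤ n := by omega
    have hsq : (P ^ 2).coeff m = ∑ ij ∈ antidiagonal m, α ij.1 * α ij.2 := by
      rw [sq, coeff_mul]
      exact sum_congr rfl fun ij hij => by rw [(hcoeff m hm ij hij).1, (hcoeff m hm ij hij).2]
    have hder : (P * (X * derivative P)).coeff m
        = ∑ ij ∈ antidiagonal m, (ij.2 : K) * (α ij.1 * α ij.2) := by
      rw [coeff_mul]
      refine sum_congr rfl fun ij hij => ?_
      rw [coeff_X_mul_derivative, (hcoeff m hm ij hij).1, (hcoeff m hm ij hij).2]
      ring
    have hrec :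
        α (m + 1) = ((m : K) / 2 + 3 / 4) * ∑ ij ∈ antidiagonal m, α ij.1 * α ij.2 := by
      rw [hαrec m, Nat.sum_antidiagonal_eq_sum_range_succ (fun i j => α i * α j)]
    simp only [coeff_sub, coeff_one, mul_assoc, coeff_C_mul, coeff_X_mul, hsq, hder,
      P, coeff_partialSum_of_le α n (Nat.lt_succ_iff.mp hk), hrec, Nat.succ_ne_zero, if_false]
    linear_combination (-1 / 2 : K) * two_mul_sum_antidiagonal_snd_mul α m

/-- A point where `e` exceeds `M z^p` would propagate to `δ`: where the two touch, the drift
`a e ≥ c M z^p / z²` beats the slope `p M z^(p-1)` of the barrier. -/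
theorem le_mul_pow_of_hasDerivAt_eq_mul_add {e a r : ℝ → ℝ} {c C M δ : ℝ} {p : ℕ}
    (hpδ : p * δ ≤ c / 2) (hM₀ : 0 ≤ M) (hCM : 2 * C < c * M)
    (hderiv : ∀ z ∈ Ioc 0 δ, HasDerivAt e (a z * e z + r z) z)
    (ha : ∀ z ∈ Ioc 0 δ, c / z ^ 2 ≤ a z)
    (hr : ∀ z ∈ Ioc 0 δ, |r z| ≤ C * (z ^ p / z ^ 2))
    (hδ : e δ < M * δ ^ p) :
    ∀ z ∈ Ioc 0 δ, e z ≤ M * z ^ p := by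
  intro w hw
  by_contra! hwM
  have hsub : Icc w δ ⊆ Ioc 0 δ := fun z hz => ⟨hw.1.trans_le hz.1, hz.2⟩
  have hpow : ∀ z, HasDerivAt (fun z => M * z ^ p) (M * (p * z ^ (p - 1))) z :=
    fun z => (hasDerivAt_pow p z).const_mul M
  have hcross : M * δ ^ p ≤ e δ := by
    refine image_le_of_deriv_right_lt_deriv_boundary' (f := fun z => M * z ^ p)
      (by fun_prop) (fun z _ => (hpow z).hasDerivWithinAt) hwM.le
      (fun z hz => (hderiv z (hsub hz)).continuousAt.continuousWithinAt)
      (fun z hz => (hderiv z (hsub (Ico_subset_Icc_self hz))).hasDerivWithinAt) ?_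
      ⟨hw.2, le_rfl⟩
    intro z hz hez
    obtain ⟨hz0, hzδ⟩ := hsub (Ico_subset_Icc_self hz)
    have hq : 0 < z ^ p / z ^ 2 := by positivity
    have hpz : M * (p * z ^ (p - 1)) = M * (p * z) * (z ^ p / z ^ 2) := by
      rcases p with _ | p
      · simp
      · rw [Nat.add_sub_cancel]; field_simp; ring
    have hlin : M * (p * z) ≤ M * (c / 2) :=
      mul_le_mul_of_nonneg_left ((mul_le_mul_of_nonneg_left hzδ p.cast_nonneg).trans hpδ) hM₀
    have hae : c * M * (z ^ p / z ^ 2) ≤ a z * e z := by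
      rw [← hez]
      calc c * M * (z ^ p / z ^ 2) = c / z ^ 2 * (M * z ^ p) := by field_simp
        _ ≤ a z * (M * z ^ p) := by gcongr; exact ha z ⟨hz0, hzδ⟩
    have hrz := neg_le_of_abs_le (hr z ⟨hz0, hzδ⟩)
    rw [hpz]
    nlinarith
  exact hδ.not_ge hcross

theorem isBigO_pow_of_hasDerivAt_eq_mul_add {e a r : ℝ → ℝ} {c : ℝ} {p : ℕ} (hc : 0 < c)
    (hderiv : ∀ᶠ z in 𝓝[>] 0, HasDerivAt e (a z * e z + r z) z)
    (ha : ∀ᶠ z in 𝓝[>] 0, c / z ^ 2 ≤ a z)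
    (hr : r =O[𝓝[>] 0] fun z => z ^ p / z ^ 2) :
    e =O[𝓝[>] 0] fun z => z ^ p := by
  obtain ⟨C, hC⟩ := hr.bound
  have hsmall : ∀ᶠ z in 𝓝[>] (0 : ℝ), p * z ≤ c / 2 := by
    have : Tendsto (fun z : ℝ => p * z) (𝓝[>] 0) (𝓝 0) := by
      simpa using ((continuous_const_mul (p : ℝ)).tendsto 0).mono_left nhdsWithin_le_nhds
    exact this.eventually (eventually_le_nhds (half_pos hc))
  obtain ⟨δ, hδ, hsub⟩ :=
    mem_nhdsGT_iff_exists_Ioc_subset.mp ((hderiv.and ha).and (hC.and hsmall))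
  have hδp : 0 < δ ^ p := pow_pos hδ p
  obtain ⟨M, hM₀, hCM, hδM⟩ : ∃ M, 0 ≤ M ∧ 2 * C < c * M ∧ |e δ| < M * δ ^ p := by
    refine ⟨max (2 * |C| / c + 1) ((|e δ| + 1) / δ ^ p), by positivity, ?_, ?_⟩
    · calc 2 * C < c * (2 * |C| / c + 1) := by
            rw [mul_add, mul_div_cancel₀ _ hc.ne']; linarith [le_abs_self C]
        _ ≤ _ := by gcongr; exact le_max_left _ _
    · calc |e δ| < (|e δ| + 1) / δ ^ p * δ ^ p := by
            rw [div_mul_cancel₀ _ hδp.ne']; linarith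
        _ ≤ _ := by gcongr; exact le_max_right _ _
  have hr' : ∀ z ∈ Ioc 0 δ, |r z| ≤ C * (z ^ p / z ^ 2) := fun z hz => by
    have h := (hsub hz).2.1
    rwa [Real.norm_eq_abs, Real.norm_eq_abs, abs_of_pos (show 0 < z ^ p / z ^ 2 by
      have := hz.1; positivity)] at h
  have hpδ : p * δ ≤ c / 2 := (hsub ⟨hδ, le_rfl⟩).2.2
  have hup := le_mul_pow_of_hasDerivAt_eq_mul_add hpδ hM₀ hCM
    (fun z hz => (hsub hz).1.1) (fun z hz => (hsub hz).1.2) hr'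
    ((le_abs_self _).trans_lt hδM)
  have hlow := le_mul_pow_of_hasDerivAt_eq_mul_add (e := fun z => -e z) (r := fun z => -r z)
    hpδ hM₀ hCM (fun z hz => (hsub hz).1.1.neg.congr_deriv (by ring))
    (fun z hz => (hsub hz).1.2) (fun z hz => by simpa using hr' z hz) ((neg_le_abs _).trans_lt hδM)
  refine IsBigO.of_bound M ?_
  filter_upwards [Ioc_mem_nhdsGT hδ] with z hz
  rw [Real.norm_eq_abs, Real.norm_eq_abs, abs_of_pos (pow_pos hz.1 p)]
  exact abs_le.mpr ⟨by linarith [hlow z hz], hup z hz⟩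

theorem riccati_sub_eq {z y s s' d : ℝ} (hz : z ≠ 0) (hy : y ≠ 0) (hs : s ≠ 0)
    (hd : s - 1 - 3 / 4 * z * s ^ 2 - z ^ 2 * (s * s') = d) :
    (z ^ 2)⁻¹ * (1 - y⁻¹) - 3 / 4 * y / z - s' =
      (1 / (z ^ 2 * (y * s)) - 3 / (4 * z)) * (y - s) + d / (z ^ 2 * s) := by
  rw [← hd]
  field_simp
  ring

theorem quarter_div_sq_le_one_div_mul_sub {z q : ℝ} (hz : 0 < z) (hz3 : z ≤ 1 / 3)
    (hq : 0 < q) (hq2 : q ≤ 2) :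
    1 / 4 / z ^ 2 ≤ 1 / (z ^ 2 * q) - 3 / (4 * z) := by
  have h2 : 1 / 2 / z ^ 2 ≤ 1 / (z ^ 2 * q) := by
    rw [div_div, one_div_le_one_div (by positivity) (by positivity)]; nlinarith [sq_nonneg z]
  have h3 : 3 / (4 * z) ≤ 1 / 4 / z ^ 2 := by
    rw [div_le_div_iff₀ (by positivity) (by positivity)]; nlinarith
  linarith [show 1 / 2 / z ^ 2 = 1 / 4 / z ^ 2 + 1 / 4 / z ^ 2 by ring]

theorem stmt_12_general (z₀ : ℝ) (hz₀ : 0 < z₀)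
    (g : ℝ → ℝ)
    (hsol : ∀ z ∈ Ioc (0 : ℝ) z₀,
      HasDerivAt g ((z ^ 2)⁻¹ * (1 - (g z)⁻¹) - 3 / 4 * g z / z) z)
    (hlim : Tendsto g (nhdsWithin 0 (Ioi 0)) (nhds 1))
    (α : ℕ → ℝ) (hα0 : α 0 = 1)
    (hαrec : ∀ k : ℕ, α (k + 1) =
      ((k : ℝ) / 2 + 3 / 4) * ∑ j ∈ range (k + 1), α j * α (k - j)) :
    ∀ n : ℕ,
      (fun z : ℝ => g z - ∑ k ∈ range (n + 1), α k * z ^ k)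
        =o[nhdsWithin 0 (Ioi 0)] (fun z : ℝ => z ^ n) := by
  intro n
  obtain ⟨R, hR⟩ := X_pow_dvd_partialSum_defect hα0 hαrec n
  set P := partialSum α n
  have hP : Tendsto P.eval (𝓝[>] 0) (𝓝 1) := by
    have h0 : P.eval 0 = 1 := by simp [P, eval_partialSum, sum_range_succ', hα0]
    exact h0 ▸ (P.continuous.tendsto 0).mono_left nhdsWithin_le_nhds
  have hgP : ∀ᶠ z in 𝓝[>] 0, g z * P.eval z ∈ Icc (1 / 2 : ℝ) 2 := by
    simpa using (hlim.mul hP).eventually (Icc_mem_nhds (by norm_num) (by norm_num))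
  have hz : ∀ᶠ z in 𝓝[>] (0 : ℝ), z ∈ Ioc 0 (min z₀ (1 / 3)) :=
    Ioc_mem_nhdsGT (by positivity)
  have hO : (fun z => g z - P.eval z) =O[𝓝[>] 0] fun z => z ^ (n + 1) := by
    refine isBigO_pow_of_hasDerivAt_eq_mul_add (c := 1 / 4)
      (a := fun z => 1 / (z ^ 2 * (g z * P.eval z)) - 3 / (4 * z))
      (r := fun z => z ^ (n + 1) / z ^ 2 * (R.eval z / P.eval z)) (by norm_num) ?_ ?_ ?_
    · filter_upwards [hgP, hz] with z hgPz hz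
      have hne := mul_ne_zero_iff.mp (show g z * P.eval z ≠ 0 by linarith [hgPz.1])
      refine ((hsol z ⟨hz.1, hz.2.trans (min_le_left _ _)⟩).sub (P.hasDerivAt z)).congr_deriv ?_
      rw [riccati_sub_eq hz.1.ne' hne.1 hne.2 (by simpa using congrArg (eval z) hR)]
      ring
    · filter_upwards [hgP, hz] with z hgPz hz
      exact quarter_div_sq_le_one_div_mul_sub hz.1 (hz.2.trans (min_le_right _ _))
        (by linarith [hgPz.1]) hgPz.2
    · have hRP : (fun z => R.eval z / P.eval z) =O[𝓝[>] 0] fun _ => (1 : ℝ) :=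
        (((R.continuous.tendsto 0).mono_left nhdsWithin_le_nhds).div hP one_ne_zero).isBigO_one ℝ
      simpa using (isBigO_refl (fun z : ℝ => z ^ (n + 1) / z ^ 2) _).mul hRP
  simpa only [P, eval_partialSum] using
    hO.trans_isLittleO ((isLittleO_pow_pow n.lt_succ_self).mono nhdsWithin_le_nhds)

/-- If `g` is the left maximal solution of `g' = z⁻²(1 − 1/g) − (3/4) g/z` with
`g z₀ = g₀ > 0` (`z₀ > 0`), positive on `(0, z₀]` with `g → 1` at `0⁺`, then for
every `n ∈ ℕ`, `g(z) = Σ_{k=0}^n α_k z^k + o(z^n)` as `z → 0⁺`, where `α₀ = 1`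
and `α_{k+1} = (k/2 + 3/4) Σ_{j≤k} α_j α_{k−j}`. -/
theorem stmt_12 (z₀ g₀ : ℝ) (hz₀ : 0 < z₀) (hg₀ : 0 < g₀)
    (g : ℝ → ℝ) (hinit : g z₀ = g₀)
    (hpos : ∀ z ∈ Ioc (0 : ℝ) z₀, 0 < g z)
    (hsol : ∀ z ∈ Ioc (0 : ℝ) z₀,
      HasDerivAt g ((z ^ 2)⁻¹ * (1 - (g z)⁻¹) - 3 / 4 * g z / z) z)
    (hlim : Tendsto g (nhdsWithin 0 (Ioi 0)) (nhds 1))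
    (α : ℕ → ℝ) (hα0 : α 0 = 1)
    (hαrec : ∀ k : ℕ, α (k + 1) =
      ((k : ℝ) / 2 + 3 / 4) * ∑ j ∈ range (k + 1), α j * α (k - j)) :
    ∀ n : ℕ,
      (fun z : ℝ => g z - ∑ k ∈ range (n + 1), α k * z ^ k)
        =o[nhdsWithin 0 (Ioi 0)] (fun z : ℝ => z ^ n) :=
  stmt_12_general z₀ hz₀ g hsol hlim α hα0 hαrec
end

section
/- If g̃(z) = Σ α_k z^k ∈ ℝ[[z]] solves (1 − (3/4)z g − z² g') g = 1 with α₀ = 1, then its multiplicative inverse f̃ = g̃⁻¹ = Σ β_n z^n in ℝ[[z]] satisfies β₀ = 1 and β_{n+1} = (n − 3/4) β_n + Σ_{j+k=n+1, 0≤j,k≤n} β_j β_k − Σ_{j+k+ℓ=n+1, 0≤j,k,ℓ≤n} β_j β_k β_ℓ. -/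
open Finset PowerSeries

lemma coeff_mul_mk (β γ : ℕ → ℝ) (m : ℕ) :
    (PowerSeries.coeff (R := ℝ) m) (PowerSeries.mk β * PowerSeries.mk γ)
      = ∑ k ∈ range (m + 1), β k * γ (m - k) := by
  rw [PowerSeries.coeff_mul, Finset.Nat.sum_antidiagonal_eq_sum_range_succ_mk]
  simp

lemma conv2' (β γ : ℕ → ℝ) (m N : ℕ) (hm : m < N) :
    ∑ k ∈ range N, ∑ l ∈ range N, (if k + l = m then β k * γ l else 0)
      = ∑ k ∈ range (m + 1), β k * γ (m - k) := by
  rw [← Finset.sum_subset (Finset.range_subset_range.2 hm)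
      (f := fun k => ∑ l ∈ range N, (if k + l = m then β k * γ l else 0)) ?_]
  · apply Finset.sum_congr rfl
    intro k hk
    rw [Finset.mem_range] at hk
    have : ∀ l, (k + l = m) = (l = m - k) := by intro l; simp only [eq_iff_iff]; omega
    simp only [this]
    rw [Finset.sum_ite_eq' (range N) (m - k) (fun l => β k * γ l)]
    rw [if_pos (Finset.mem_range.2 (by omega))]
  · intro k _ hk
    rw [Finset.mem_range] at hk
    apply Finset.sum_eq_zero
    intro l _
    rw [if_neg (by omega)]

lemma ext2 (β : ℕ → ℝ) (n : ℕ) :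
    ∑ j ∈ range (n + 2), ∑ k ∈ range (n + 2), (if j + k = n + 1 then β j * β k else 0)
      = (∑ j ∈ range (n + 1), ∑ k ∈ range (n + 1), if j + k = n + 1 then β j * β k else 0)
        + β 0 * β (n + 1) + β (n + 1) * β 0 := by
  rw [Finset.sum_range_succ]
  have h1 : ∀ j ∈ range (n + 1),
      (∑ k ∈ range (n + 2), if j + k = n + 1 then β j * β k else 0)
        = (∑ k ∈ range (n + 1), if j + k = n + 1 then β j * β k else 0)
          + (if j = 0 then β j * β (n + 1) else 0) := by
    intro j hj
    rw [Finset.sum_range_succ]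
    congr 1
    have : (j + (n + 1) = n + 1) = (j = 0) := by simp only [eq_iff_iff]; omega
    simp only [this]
  rw [Finset.sum_congr rfl h1, Finset.sum_add_distrib]
  rw [Finset.sum_ite_eq' (range (n + 1)) 0 (fun j => β j * β (n + 1)),
    if_pos (Finset.mem_range.2 (by omega))]
  have h2 : (∑ k ∈ range (n + 2), if n + 1 + k = n + 1 then β (n + 1) * β k else 0)
      = β (n + 1) * β 0 := by
    have : ∀ k, (n + 1 + k = n + 1) = (k = 0) := by intro k; simp only [eq_iff_iff]; omega
    simp only [this]
    rw [Finset.sum_ite_eq' (range (n + 2)) 0 (fun k => β (n + 1) * β k),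
      if_pos (Finset.mem_range.2 (by omega))]
  rw [h2]

lemma ext3 (β : ℕ → ℝ) (n : ℕ) :
    ∑ j ∈ range (n + 2), ∑ k ∈ range (n + 2), ∑ l ∈ range (n + 2),
        (if j + k + l = n + 1 then β j * β k * β l else 0)
      = (∑ j ∈ range (n + 1), ∑ k ∈ range (n + 1), ∑ l ∈ range (n + 1),
          if j + k + l = n + 1 then β j * β k * β l else 0)
        + β (n + 1) * β 0 * β 0 + β 0 * β (n + 1) * β 0 + β 0 * β 0 * β (n + 1) := by
  have peel_l : ∀ j k : ℕ,
      (∑ l ∈ range (n + 2), if j + k + l = n + 1 then β j * β k * β l else 0)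
        = (∑ l ∈ range (n + 1), if j + k + l = n + 1 then β j * β k * β l else 0)
          + (if j = 0 ∧ k = 0 then β j * β k * β (n + 1) else 0) := by
    intro j k
    rw [Finset.sum_range_succ]
    congr 1
    have : (j + k + (n + 1) = n + 1) = (j = 0 ∧ k = 0) := by
      simp only [eq_iff_iff]; omega
    simp only [this]
  have s1 : (∑ j ∈ range (n + 2), ∑ k ∈ range (n + 2), ∑ l ∈ range (n + 2),
        (if j + k + l = n + 1 then β j * β k * β l else 0))
      = (∑ j ∈ range (n + 2), ∑ k ∈ range (n + 2),
          ((∑ l ∈ range (n + 1), if j + k + l = n + 1 then β j * β k * β l else 0)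
            + (if j = 0 ∧ k = 0 then β j * β k * β (n + 1) else 0))) := by
    apply Finset.sum_congr rfl; intro j _
    apply Finset.sum_congr rfl; intro k _
    exact peel_l j k
  rw [s1]
  simp only [Finset.sum_add_distrib]
  have s2 : (∑ j ∈ range (n + 2), ∑ k ∈ range (n + 2),
      if j = 0 ∧ k = 0 then β j * β k * β (n + 1) else 0) = β 0 * β 0 * β (n + 1) := by
    simp only [ite_and]
    rw [Finset.sum_eq_single 0]
    · simp [Finset.sum_ite_eq']
    · intro j _ hj
      simp [hj]
    · intro h; exact absurd (Finset.mem_range.2 (by omega)) h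
  rw [s2]
  have peel_k : ∀ j : ℕ,
      (∑ k ∈ range (n + 2), ∑ l ∈ range (n + 1),
          if j + k + l = n + 1 then β j * β k * β l else 0)
        = (∑ k ∈ range (n + 1), ∑ l ∈ range (n + 1),
            if j + k + l = n + 1 then β j * β k * β l else 0)
          + (if j = 0 then β j * β (n + 1) * β 0 else 0) := by
    intro j
    rw [Finset.sum_range_succ]
    congr 1
    by_cases h : j = 0
    · subst h
      rw [if_pos rfl]
      have : ∀ l, (0 + (n + 1) + l = n + 1) = (l = 0) := by
        intro l; simp only [eq_iff_iff]; omega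
      simp only [this]
      rw [Finset.sum_ite_eq' (range (n + 1)) 0 (fun l => β 0 * β (n + 1) * β l),
        if_pos (Finset.mem_range.2 (by omega))]
    · rw [if_neg h]
      exact Finset.sum_eq_zero fun l _ => if_neg (by omega)
  have s3 : (∑ j ∈ range (n + 2), ∑ k ∈ range (n + 2), ∑ l ∈ range (n + 1),
        if j + k + l = n + 1 then β j * β k * β l else 0)
      = (∑ j ∈ range (n + 2),
          ((∑ k ∈ range (n + 1), ∑ l ∈ range (n + 1),
            if j + k + l = n + 1 then β j * β k * β l else 0)
          + (if j = 0 then β j * β (n + 1) * β 0 else 0))) := by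
    exact Finset.sum_congr rfl fun j _ => peel_k j
  rw [s3, Finset.sum_add_distrib]
  rw [Finset.sum_ite_eq' (range (n + 2)) 0 (fun j => β j * β (n + 1) * β 0),
    if_pos (Finset.mem_range.2 (by omega))]
  have s4 : (∑ j ∈ range (n + 2), ∑ k ∈ range (n + 1), ∑ l ∈ range (n + 1),
        if j + k + l = n + 1 then β j * β k * β l else 0)
      = (∑ j ∈ range (n + 1), ∑ k ∈ range (n + 1), ∑ l ∈ range (n + 1),
          if j + k + l = n + 1 then β j * β k * β l else 0)
        + β (n + 1) * β 0 * β 0 := by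
    rw [Finset.sum_range_succ]
    congr 1
    have hk : ∀ k ∈ range (n + 1),
        (∑ l ∈ range (n + 1), if n + 1 + k + l = n + 1 then β (n + 1) * β k * β l else 0)
          = (if k = 0 then β (n + 1) * β 0 * β 0 else 0) := by
      intro k _
      by_cases h : k = 0
      · subst h
        rw [if_pos rfl]
        have : ∀ l, (n + 1 + 0 + l = n + 1) = (l = 0) := by
          intro l; simp only [eq_iff_iff]; omega
        simp only [this]
        rw [Finset.sum_ite_eq' (range (n + 1)) 0 (fun l => β (n + 1) * β 0 * β l),
          if_pos (Finset.mem_range.2 (by omega))]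
      · rw [if_neg h]
        exact Finset.sum_eq_zero fun l _ => if_neg (by omega)
    rw [Finset.sum_congr rfl hk,
      Finset.sum_ite_eq' (range (n + 1)) 0 (fun _ => β (n + 1) * β 0 * β 0),
      if_pos (Finset.mem_range.2 (by omega))]
  rw [s4]

/-- If `g̃ = Σ α_k z^k ∈ ℝ⟦X⟧` is the formal power series solution with `α₀ = 1`
of `(1 − (3/4) z g − z² g') g = 1`, then its multiplicative inverse
`f̃ = g̃⁻¹ = Σ β_n z^n` satisfies `β₀ = 1` and
`β_{n+1} = (n − 3/4) β_n + Σ_{j+k=n+1, 0≤j,k≤n} β_j β_k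
  − Σ_{j+k+ℓ=n+1, 0≤j,k,ℓ≤n} β_j β_k β_ℓ`. -/
theorem stmt_14 (α : ℕ → ℝ) (hα0 : α 0 = 1)
    (heq : (1 - PowerSeries.C (R := ℝ) (3 / 4) * PowerSeries.X * PowerSeries.mk α
        - PowerSeries.X ^ 2 * d⁄dX ℝ (PowerSeries.mk α)) * PowerSeries.mk α = 1)
    (β : ℕ → ℝ) (hinv : PowerSeries.mk α * PowerSeries.mk β = 1) :
    β 0 = 1 ∧
    ∀ n : ℕ, β (n + 1) =
      ((n : ℝ) - 3 / 4) * β n +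
      (∑ j ∈ range (n + 1), ∑ k ∈ range (n + 1),
        if j + k = n + 1 then β j * β k else 0) -
      (∑ j ∈ range (n + 1), ∑ k ∈ range (n + 1), ∑ l ∈ range (n + 1),
        if j + k + l = n + 1 then β j * β k * β l else 0) := by
  have hβ0 : β 0 = 1 := by
    have h0 := congrArg (PowerSeries.constantCoeff (R := ℝ)) hinv
    simp [hα0] at h0
    exact h0
  refine ⟨hβ0, fun n => ?_⟩
  -- derivative of the inverse relation
  have hd : d⁄dX ℝ (PowerSeries.mk α * PowerSeries.mk β) = 0 := by
    rw [hinv]; simp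
  rw [Derivation.leibniz, smul_eq_mul, smul_eq_mul] at hd
  -- f = 1 - (3/4) X g - X² g'
  have hf : PowerSeries.mk β = 1 - PowerSeries.C (R := ℝ) (3 / 4) * PowerSeries.X * PowerSeries.mk α
      - PowerSeries.X ^ 2 * d⁄dX ℝ (PowerSeries.mk α) := by
    linear_combination (1 - PowerSeries.C (R := ℝ) (3 / 4) * PowerSeries.X * PowerSeries.mk α
      - PowerSeries.X ^ 2 * d⁄dX ℝ (PowerSeries.mk α)) * hinv - PowerSeries.mk β * heq
  -- key ODE for f
  have key : (PowerSeries.mk β) ^ 3 = (PowerSeries.mk β) ^ 2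
      - PowerSeries.C (R := ℝ) (3 / 4) * PowerSeries.X * PowerSeries.mk β
      + PowerSeries.X ^ 2 * d⁄dX ℝ (PowerSeries.mk β) := by
    linear_combination (PowerSeries.mk β) ^ 2 * hf
      + (- PowerSeries.C (R := ℝ) (3 / 4) * PowerSeries.X * PowerSeries.mk β
        + PowerSeries.X ^ 2 * d⁄dX ℝ (PowerSeries.mk β)) * hinv
      - PowerSeries.X ^ 2 * PowerSeries.mk β * hd
  have hco := congrArg (PowerSeries.coeff (R := ℝ) (n + 1)) key
  rw [map_add, map_sub] at hco
  -- coefficient of f³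
  have hc3 : (PowerSeries.coeff (R := ℝ) (n + 1)) ((PowerSeries.mk β) ^ 3)
      = ∑ j ∈ range (n + 2), ∑ k ∈ range (n + 2), ∑ l ∈ range (n + 2),
          (if j + k + l = n + 1 then β j * β k * β l else 0) := by
    have h3 : (PowerSeries.mk β) ^ 3 = PowerSeries.mk β * (PowerSeries.mk β * PowerSeries.mk β) := by
      ring
    rw [h3, PowerSeries.coeff_mul, Finset.Nat.sum_antidiagonal_eq_sum_range_succ_mk]
    simp only [PowerSeries.coeff_mk, coeff_mul_mk]
    apply Finset.sum_congr rfl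
    intro j hj
    rw [Finset.mem_range] at hj
    rw [← conv2' β β (n + 1 - j) (n + 2) (by omega), Finset.mul_sum]
    apply Finset.sum_congr rfl
    intro k _
    rw [Finset.mul_sum]
    apply Finset.sum_congr rfl
    intro l _
    have : (k + l = n + 1 - j) = (j + k + l = n + 1) := by simp only [eq_iff_iff]; omega
    simp only [this]
    split_ifs <;> ring
  -- coefficient of f²
  have hc2 : (PowerSeries.coeff (R := ℝ) (n + 1)) ((PowerSeries.mk β) ^ 2)
      = ∑ j ∈ range (n + 2), ∑ k ∈ range (n + 2),
          (if j + k = n + 1 then β j * β k else 0) := by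
    rw [pow_two, coeff_mul_mk, ← conv2' β β (n + 1) (n + 2) (by omega)]
  -- coefficient of (3/4) X f
  have hcX : (PowerSeries.coeff (R := ℝ) (n + 1))
      (PowerSeries.C (R := ℝ) (3 / 4) * PowerSeries.X * PowerSeries.mk β) = 3 / 4 * β n := by
    rw [mul_assoc, PowerSeries.coeff_C_mul, PowerSeries.coeff_succ_X_mul, PowerSeries.coeff_mk]
  -- coefficient of X² f'
  have hcD : (PowerSeries.coeff (R := ℝ) (n + 1))
      (PowerSeries.X ^ 2 * d⁄dX ℝ (PowerSeries.mk β)) = (n : ℝ) * β n := by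
    cases n with
    | zero =>
      simp [pow_two, mul_assoc, PowerSeries.coeff_succ_X_mul]
    | succ m =>
      have : (m + 1 : ℕ) + 1 = (m + 1) + 1 := rfl
      rw [pow_two, mul_assoc, PowerSeries.coeff_succ_X_mul, PowerSeries.coeff_succ_X_mul,
        PowerSeries.coeff_derivative, PowerSeries.coeff_mk]
      push_cast
      ring
  rw [hc3, hc2, hcX, hcD, ext2, ext3, hβ0] at hco
  linarith [hco]
end
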